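/- arXiv:1311.7252 — 4 statements merged into one kernel-verified Lean document; each statement's English description precedes it below -/
import Mathlib

section
/- (Garsia's criterion for symmetric Gelfand pairs) Let G be a finite group acting transitively on a finite set X via π with point stabilizer K. The following are equivalent: (a) every orbit of G on X × X (under the diagonal action) is symmetric, i.e. invariant under the flip (x₁,x₂) ↦ (x₂,x₁); (b) every double coset KsK in G contains the inverses of all its elements (g ∈ KsK implies g⁻¹ ∈ KsK); (c) (G,K) is a Gelfand pair and every irreducible subrepresentation of the permutation representation λ_π is real. -/
open Module

namespace CST

variable {G : Type*} [Group G]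

/-- The `τ`-conjugate representation `ρ^τ` on the dual space, `ρ^τ(g) = ρ(τ(g))^T`. -/
def tauConj {k V : Type*} [CommRing k] [AddCommGroup V] [Module k V]
    (ρ : Representation k G V) (τ : G → G)
    (hmul : ∀ a b : G, τ (a * b) = τ b * τ a) :
    Representation k G (Module.Dual k V) where
  toFun g := (ρ (τ g)).dualMap
  map_one' := by
    have h0 : τ 1 = τ 1 * τ 1 := by simpa using hmul 1 1
    have h2 : τ 1 * 1 = τ 1 * τ 1 := by rw [mul_one]; exact h0
    have h1 : τ 1 = 1 := (mul_left_cancel h2).symm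
    ext φ v
    simp [h1]
  map_mul' g h := by
    ext φ v
    simp [hmul, LinearMap.dualMap_apply, Module.End.mul_apply, map_mul]

/-- The space of intertwining operators between two representations. -/
def repHom {k V W : Type*} [CommRing k] [AddCommGroup V] [Module k V]
    [AddCommGroup W] [Module k W]
    (ρ : Representation k G V) (σ : Representation k G W) :
    Submodule k (V →ₗ[k] W) where
  carrier := {A | ∀ g : G, A ∘ₗ ρ g = σ g ∘ₗ A}
  zero_mem' := by intro g; ext v; simp
  add_mem' := by
    intro A B hA hB g
    ext v
    have h1 := LinearMap.congr_fun (hA g) v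
    have h2 := LinearMap.congr_fun (hB g) v
    simp only [LinearMap.comp_apply, LinearMap.add_apply] at *
    simp [h1, h2]
  smul_mem' := by
    intro c A hA g
    ext v
    have h1 := LinearMap.congr_fun (hA g) v
    simp only [LinearMap.comp_apply, LinearMap.smul_apply] at *
    simp [h1]

/-- Symmetric operators `A : V' → V` (identifying `V` with its bidual):
`φ(Aψ) = ψ(Aφ)`. -/
def symSub (k V : Type*) [CommRing k] [AddCommGroup V] [Module k V] :
    Submodule k (Module.Dual k V →ₗ[k] V) where
  carrier := {A | ∀ φ ψ : Module.Dual k V, φ (A ψ) = ψ (A φ)}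
  zero_mem' := by intro φ ψ; simp
  add_mem' := by
    intro A B hA hB φ ψ
    simp [hA φ ψ, hB φ ψ]
  smul_mem' := by
    intro c A hA φ ψ
    simp [hA φ ψ]

/-- Antisymmetric operators `A : V' → V`: `φ(Aψ) = -ψ(Aφ)`. -/
def skewSub (k V : Type*) [CommRing k] [AddCommGroup V] [Module k V] :
    Submodule k (Module.Dual k V →ₗ[k] V) where
  carrier := {A | ∀ φ ψ : Module.Dual k V, φ (A ψ) = -ψ (A φ)}
  zero_mem' := by intro φ ψ; simp
  add_mem' := by
    intro A B hA hB φ ψ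
    simp [hA φ ψ, hB φ ψ]; ring
  smul_mem' := by
    intro c A hA φ ψ
    simp [hA φ ψ]

/-- The `τ`-Frobenius–Schur number
`C_τ(ρ) = dim Hom_G^Sym(ρ^τ, ρ) - dim Hom_G^Skew(ρ^τ, ρ)`. -/
noncomputable def FSnum {V : Type*} [AddCommGroup V] [Module ℂ V]
    (ρ : Representation ℂ G V) (τ : G → G)
    (hmul : ∀ a b : G, τ (a * b) = τ b * τ a) : ℤ :=
  (Module.finrank ℂ ↥(repHom (tauConj ρ τ hmul) ρ ⊓ symSub ℂ V) : ℤ)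
    - (Module.finrank ℂ ↥(repHom (tauConj ρ τ hmul) ρ ⊓ skewSub ℂ V) : ℤ)

/-- Equivalence of representations. -/
def RepEquiv {k V W : Type*} [CommRing k] [AddCommGroup V] [Module k V]
    [AddCommGroup W] [Module k W]
    (ρ : Representation k G V) (σ : Representation k G W) : Prop :=
  ∃ e : V ≃ₗ[k] W, ∀ (g : G) (v : V), e (ρ g v) = σ g (e v)

/-- Irreducibility of a representation. -/
def IsIrreducible {k V : Type*} [CommRing k] [AddCommGroup V] [Module k V]
    (ρ : Representation k G V) : Prop :=
  Nontrivial V ∧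
    ∀ U : Submodule k V, (∀ (g : G), ∀ v ∈ U, ρ g v ∈ U) → U = ⊥ ∨ U = ⊤

/-- The subrepresentation on an invariant submodule. -/
def subRep {k V : Type*} [CommRing k] [AddCommGroup V] [Module k V]
    (ρ : Representation k G V) (U : Submodule k V)
    (hU : ∀ (g : G), ∀ v ∈ U, ρ g v ∈ U) : Representation k G U where
  toFun g := (ρ g).restrict (hU g)
  map_one' := by
    ext v
    simp [LinearMap.restrict_apply]
  map_mul' g h := by
    ext v
    simp [LinearMap.restrict_apply]

/-- A representation is multiplicity-free: in any decomposition into irreducible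
subrepresentations, the summands are pairwise non-equivalent. -/
def MultFree {k V : Type*} [CommRing k] [AddCommGroup V] [Module k V]
    (ρ : Representation k G V) : Prop :=
  ∀ (m : ℕ) (U : Fin m → Submodule k V)
    (hU : ∀ i, ∀ (g : G), ∀ v ∈ U i, ρ g v ∈ U i),
    DirectSum.IsInternal U →
    (∀ i, IsIrreducible (subRep ρ (U i) (hU i))) →
    ∀ i j, i ≠ j → ¬ RepEquiv (subRep ρ (U i) (hU i)) (subRep ρ (U j) (hU j))

/-- A representation of `G` is real if it admits a basis in which all matrix
coefficients are real valued. -/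
def IsRealRep {V : Type*} [AddCommGroup V] [Module ℂ V]
    (ρ : Representation ℂ G V) : Prop :=
  ∃ (n : ℕ) (b : Basis (Fin n) ℂ V),
    ∀ (g : G) (i j : Fin n), ((LinearMap.toMatrix b b (ρ g)) i j).im = 0

/-- Direct sum of two representations. -/
def prodRep {k V W : Type*} [CommRing k] [AddCommGroup V] [Module k V]
    [AddCommGroup W] [Module k W]
    (σ : Representation k G V) (ρ : Representation k G W) :
    Representation k G (V × W) where
  toFun g := (σ g).prodMap (ρ g)
  map_one' := by
    apply LinearMap.ext
    intro x
    simp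
  map_mul' g h := by
    apply LinearMap.ext
    intro x
    simp [Module.End.mul_apply]

/-- Induced representation carrier:
`Ind_K^G V = {F : G → V | F(gk) = σ(k⁻¹) F(g)}`. -/
def indCarrier {k V : Type*} [CommRing k] [AddCommGroup V] [Module k V]
    (K : Subgroup G) (σ : Representation k K V) : Submodule k (G → V) where
  carrier := {F | ∀ (g : G) (x : K), F (g * x) = σ x⁻¹ (F g)}
  zero_mem' := by intro g x; simp
  add_mem' := by intro F₁ F₂ h₁ h₂ g x; simp [h₁ g x, h₂ g x]
  smul_mem' := by intro c F h g x; simp [h g x]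

/-- The induced representation `Ind_K^G σ`, acting by `(g₀ · F)(g) = F(g₀⁻¹ g)`. -/
def indRep {k V : Type*} [CommRing k] [AddCommGroup V] [Module k V]
    (K : Subgroup G) (σ : Representation k K V) :
    Representation k G (indCarrier K σ) where
  toFun g₀ :=
    { toFun := fun F => ⟨fun g => F.1 (g₀⁻¹ * g), by
        intro g x
        have h := F.2 (g₀⁻¹ * g) x
        simpa [mul_assoc] using h⟩
      map_add' := fun F₁ F₂ => rfl
      map_smul' := fun c F => rfl }
  map_one' := by
    apply LinearMap.ext
    intro F
    apply Subtype.ext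
    funext g
    simp
  map_mul' g h := by
    apply LinearMap.ext
    intro F
    apply Subtype.ext
    funext x
    simp [mul_assoc, mul_inv_rev]

/-- The permutation representation of `G` on `L(X)`. -/
def permRep (G X : Type*) [Group G] [MulAction G X] :
    Representation ℂ G (X → ℂ) where
  toFun g :=
    { toFun := fun f x => f (g⁻¹ • x)
      map_add' := fun f₁ f₂ => rfl
      map_smul' := fun c f => rfl }
  map_one' := by
    ext f x
    simp
  map_mul' g h := by
    ext f x
    simp [mul_smul]

/-- The twisted action `(π^τ × π)(g)(x₁,x₂) = (π(τ(g⁻¹)) x₁, π(g) x₂)` on `X × X`. -/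
def twistAct {X : Type*} [MulAction G X] (τ : G → G) (g : G) (p : X × X) :
    X × X := (τ g⁻¹ • p.1, g • p.2)

/-- Orbits of the twisted action on `X × X`. -/
def IsTwistOrbit {X : Type*} [MulAction G X] (τ : G → G)
    (O : Set (X × X)) : Prop :=
  ∃ p : X × X, O = {q | ∃ g : G, q = twistAct τ g p}

/-- Orbits of the diagonal action of `G` on `X × X`. -/
def IsDiagOrbit (G : Type*) {X : Type*} [Group G] [MulAction G X]
    (O : Set (X × X)) : Prop :=
  ∃ p : X × X, O = {q | ∃ g : G, q = (g • p.1, g • p.2)}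

/-- `G` is `τ`-simply reducible: the tensor product of any two irreducible
representations is multiplicity-free, and every irreducible representation is
equivalent to its `τ`-conjugate. -/
def TauSimplyReducible (G : Type*) [Group G] (τ : G → G)
    (hmul : ∀ a b : G, τ (a * b) = τ b * τ a) : Prop :=
  (∀ (V W : Type) [AddCommGroup V] [Module ℂ V] [FiniteDimensional ℂ V]
      [AddCommGroup W] [Module ℂ W] [FiniteDimensional ℂ W]
      (ρ₁ : Representation ℂ G V) (ρ₂ : Representation ℂ G W),
      IsIrreducible ρ₁ → IsIrreducible ρ₂ → MultFree (ρ₁.tprod ρ₂)) ∧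
  (∀ (V : Type) [AddCommGroup V] [Module ℂ V] [FiniteDimensional ℂ V]
      (ρ : Representation ℂ G V), IsIrreducible ρ → RepEquiv (tauConj ρ τ hmul) ρ)

/-- The double coset of `s` with respect to the diagonal subgroup of `G × G × G`. -/
def diagCoset3 (G : Type*) [Group G] (s : G × G × G) : Set (G × G × G) :=
  {x | ∃ a b : G, x = (a, a, a) * s * (b, b, b)}

/-- The character of a representation. -/
noncomputable def repChar {V : Type*} [AddCommGroup V] [Module ℂ V]
    (σ : Representation ℂ G V) (g : G) : ℂ :=
  LinearMap.trace ℂ V (σ g)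

end CST

namespace GarsiaAux

variable {G X : Type*} [Group G] [Fintype X] [MulAction G X]

/-- the symmetry condition on pairs -/
def HSym (G X : Type*) [Group G] [MulAction G X] : Prop :=
  ∀ x y : X, ∃ g : G, g • x = y ∧ g • y = x

theorem orbitSym_iff_hsym :
    (∀ O : Set (X × X), CST.IsDiagOrbit G O → Prod.swap '' O = O) ↔ HSym G X := by
  constructor
  · intro h x y
    have h1 := h {q | ∃ g : G, q = (g • x, g • y)} ⟨(x, y), rfl⟩
    have hx : ((x, y) : X × X) ∈ {q | ∃ g : G, q = (g • x, g • y)} := ⟨1, by simp⟩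
    have : ((y, x) : X × X) ∈ {q | ∃ g : G, q = (g • x, g • y)} := by
      rw [← h1]; exact ⟨(x, y), hx, rfl⟩
    obtain ⟨g, hg⟩ := this
    exact ⟨g, (congrArg Prod.fst hg).symm, (congrArg Prod.snd hg).symm⟩
  · intro h O hO
    obtain ⟨⟨x, y⟩, rfl⟩ := hO
    obtain ⟨g₀, hg₁, hg₂⟩ := h x y
    have key : ∀ q ∈ {q : X × X | ∃ g : G, q = (g • x, g • y)},
        Prod.swap q ∈ {q : X × X | ∃ g : G, q = (g • x, g • y)} := by
      rintro q ⟨g, rfl⟩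
      refine ⟨g * g₀, ?_⟩
      simp only [Prod.swap_prod_mk, mul_smul, hg₁, hg₂]
    apply Set.Subset.antisymm
    · rintro q ⟨p, hp, rfl⟩; exact key p hp
    · intro q hq
      exact ⟨Prod.swap q, key q hq, Prod.swap_swap q⟩

theorem hsym_iff_coset [MulAction.IsPretransitive G X] (x₀ : X) :
    HSym G X ↔
      ∀ s g : G,
        (∃ a ∈ MulAction.stabilizer G x₀, ∃ b ∈ MulAction.stabilizer G x₀,
          g = a * s * b) →
        (∃ a ∈ MulAction.stabilizer G x₀, ∃ b ∈ MulAction.stabilizer G x₀,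
          g⁻¹ = a * s * b) := by
  constructor
  · intro h s g ⟨a, ha, b, hb, hg⟩
    obtain ⟨h₀, hh1, hh2⟩ := h x₀ (s • x₀)
    have hk1 : s⁻¹ * h₀ ∈ MulAction.stabilizer G x₀ := by
      rw [MulAction.mem_stabilizer_iff, mul_smul, hh1, inv_smul_smul]
    have hk2 : h₀ * s ∈ MulAction.stabilizer G x₀ := by
      rw [MulAction.mem_stabilizer_iff, mul_smul]; exact hh2
    have hsinv : s⁻¹ = (s⁻¹ * h₀) * s * (h₀ * s)⁻¹ := by group
    refine ⟨b⁻¹ * (s⁻¹ * h₀), mul_mem (inv_mem hb) hk1,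
      (h₀ * s)⁻¹ * a⁻¹, mul_mem (inv_mem hk2) (inv_mem ha), ?_⟩
    rw [hg]
    simp only [mul_inv_rev]
    rw [← mul_assoc, ← mul_assoc]
    rw [hsinv]; group
  · intro h x y
    obtain ⟨u, hu⟩ := MulAction.exists_smul_eq G x₀ x
    obtain ⟨t, ht⟩ := MulAction.exists_smul_eq G x₀ y
    set s := u⁻¹ * t with hs
    obtain ⟨a, ha, b, hb, hab⟩ := h s s ⟨1, one_mem _, 1, one_mem _, by group⟩
    have hbx : b • x₀ = x₀ := hb
    have hax : a⁻¹ • x₀ = x₀ := inv_mem ha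
    have hut : u * s = t := by rw [hs]; group
    refine ⟨u * (s * b) * u⁻¹, ?_, ?_⟩
    · have e1 : u * (s * b) * u⁻¹ * u = u * s * b := by group
      rw [← hu, smul_smul, e1, mul_smul, hbx, hut, ht]
    · have hsbs : s * b * s = a⁻¹ := by
        have h' : a * (s * b * s) = 1 := by
          rw [show a * (s * b * s) = a * s * b * s by group, ← hab, inv_mul_cancel]
        rw [← inv_eq_of_mul_eq_one_right h']
      have hy : u * (s * b) * u⁻¹ * t = u * (s * b * s) := by rw [hs]; group
      rw [← ht, smul_smul, hy, mul_smul, hsbs, hax, hu]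

end GarsiaAux
set_option linter.unusedSectionVars false
set_option maxHeartbeats 1000000
set_option synthInstance.maxHeartbeats 200000

namespace GarsiaAux

open CST

variable {G X : Type*} [Group G] [Fintype X] [MulAction G X]

noncomputable section

open Classical in
/-- delta function -/
def dl (y : X) : X → ℂ := fun x => if x = y then 1 else 0

lemma perm_dl (g : G) (y : X) : permRep G X g (dl y) = dl (g • y) := by
  funext x
  show dl y (g⁻¹ • x) = dl (g • y) x
  unfold dl
  by_cases h : g⁻¹ • x = y
  · rw [if_pos h, if_pos (by rw [← h, smul_inv_smul])]
  · rw [if_neg h, if_neg (fun hc => h (by rw [hc, inv_smul_smul]))]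

lemma eq_sum_dl (f : X → ℂ) : f = ∑ y, f y • dl y := by
  classical
  funext x
  rw [Finset.sum_apply]
  simp only [Pi.smul_apply, dl, smul_eq_mul, mul_ite, mul_one, mul_zero]
  simp

/-- entries of a linear operator on L(X) -/
def ent (T : (X → ℂ) →ₗ[ℂ] (X → ℂ)) (x y : X) : ℂ := T (dl y) x

lemma apply_eq_sum_ent (T : (X → ℂ) →ₗ[ℂ] (X → ℂ)) (f : X → ℂ) (x : X) :
    T f x = ∑ y, ent T x y * f y := by
  conv_lhs => rw [eq_sum_dl f]
  rw [map_sum]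
  simp only [Finset.sum_apply, map_smul, Pi.smul_apply, smul_eq_mul]
  exact Finset.sum_congr rfl fun y _ => mul_comm _ _

lemma ext_of_ent {T S : (X → ℂ) →ₗ[ℂ] (X → ℂ)} (h : ∀ x y, ent T x y = ent S x y) :
    T = S := by
  apply LinearMap.ext
  intro f
  funext x
  rw [apply_eq_sum_ent, apply_eq_sum_ent]
  exact Finset.sum_congr rfl fun y _ => by rw [h x y]

/-- equivariance of an operator -/
def Equiv' (T : (X → ℂ) →ₗ[ℂ] (X → ℂ)) : Prop :=
  ∀ (g : G) (f : X → ℂ), T (permRep G X g f) = permRep G X g (T f)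

lemma ent_equivariant {T : (X → ℂ) →ₗ[ℂ] (X → ℂ)} (hT : Equiv' (G := G) T)
    (g : G) (x y : X) : ent T (g • x) (g • y) = ent T x y := by
  unfold ent
  rw [← perm_dl, hT]
  show (T (dl y)) (g⁻¹ • g • x) = _
  rw [inv_smul_smul]

lemma ent_symm (hs : HSym G X) {T : (X → ℂ) →ₗ[ℂ] (X → ℂ)} (hT : Equiv' (G := G) T)
    (x y : X) : ent T x y = ent T y x := by
  obtain ⟨g, h1, h2⟩ := hs x y
  calc ent T x y = ent T (g • x) (g • y) := (ent_equivariant hT g x y).symm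
    _ = ent T y x := by rw [h1, h2]

lemma ent_comp (S T : (X → ℂ) →ₗ[ℂ] (X → ℂ)) (x y : X) :
    ent (S ∘ₗ T) x y = ∑ z, ent S x z * ent T z y := by
  unfold ent
  show S (T (dl y)) x = _
  rw [apply_eq_sum_ent S (T (dl y)) x]
  exact Finset.sum_congr rfl fun z _ => rfl

lemma equiv_comp {S T : (X → ℂ) →ₗ[ℂ] (X → ℂ)} (hS : Equiv' (G := G) S)
    (hT : Equiv' (G := G) T) : Equiv' (G := G) (S ∘ₗ T) := by
  intro g f
  show S (T (permRep G X g f)) = _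
  rw [hT, hS]; rfl

/-- under HSym, equivariant operators commute -/
lemma comm_of_hsym (hs : HSym G X) {S T : (X → ℂ) →ₗ[ℂ] (X → ℂ)}
    (hS : Equiv' (G := G) S) (hT : Equiv' (G := G) T) : S ∘ₗ T = T ∘ₗ S := by
  apply ext_of_ent
  intro x y
  rw [ent_comp, ent_symm hs (equiv_comp hT hS) x y]
  rw [ent_comp]
  refine Finset.sum_congr rfl fun z _ => ?_
  rw [ent_symm hs hT y z, ent_symm hs hS z x, mul_comm]

end

end GarsiaAux
namespace GarsiaAux

open CST

variable {G X : Type*} [Group G] [Fintype X] [MulAction G X]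

noncomputable section

/-- pointwise conjugation -/
def cf (f : X → ℂ) : X → ℂ := fun x => (starRingEnd ℂ) (f x)

/-- standard hermitian inner product on L(X) -/
def inn (f h : X → ℂ) : ℂ := ∑ x, (starRingEnd ℂ) (f x) * h x

/-- invariance of a submodule -/
def Invt (G : Type*) [Group G] {X : Type*} [MulAction G X]
    (U : Submodule ℂ (X → ℂ)) : Prop :=
  ∀ (g : G), ∀ f ∈ U, permRep G X g f ∈ U

lemma inn_dl_left (x : X) (h : X → ℂ) : inn (dl x) h = h x := by
  unfold inn dl
  rw [Finset.sum_eq_single x]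
  · simp
  · intro y _ hy
    rw [if_neg hy, map_zero, zero_mul]
  · simp

lemma inn_conj_symm (f h : X → ℂ) : inn f h = (starRingEnd ℂ) (inn h f) := by
  unfold inn
  rw [map_sum]
  refine Finset.sum_congr rfl fun x _ => ?_
  simp [mul_comm]

lemma inn_self_eq_zero {f : X → ℂ} (h : inn f f = 0) : f = 0 := by
  have h' : ∑ x, ((Complex.normSq (f x) : ℝ) : ℂ) = 0 := by
    rw [← h]
    exact Finset.sum_congr rfl fun x _ => Complex.normSq_eq_conj_mul_self
  have h2 : ∑ x, Complex.normSq (f x) = 0 := by exact_mod_cast h'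
  funext x
  have hx : Complex.normSq (f x) = 0 :=
    (Finset.sum_eq_zero_iff_of_nonneg fun y _ => Complex.normSq_nonneg _).mp h2 x
      (Finset.mem_univ x)
  exact Complex.normSq_eq_zero.mp hx

lemma inn_perm (g : G) (f h : X → ℂ) :
    inn (permRep G X g f) (permRep G X g h) = inn f h := by
  unfold inn
  have := Equiv.sum_comp (MulAction.toPerm (g⁻¹ : G) : X ≃ X)
    (fun x => (starRingEnd ℂ) (f x) * h x)
  rw [← this]
  rfl

lemma perm_perm_inv (g : G) (f : X → ℂ) :
    permRep G X g (permRep G X g⁻¹ f) = f := by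
  rw [← LinearMap.comp_apply, ← Module.End.mul_eq_comp, ← map_mul, mul_inv_cancel, map_one]
  rfl

lemma inn_perm_left (g : G) (f h : X → ℂ) :
    inn f (permRep G X g h) = inn (permRep G X g⁻¹ f) h := by
  conv_lhs => rw [← perm_perm_inv g f]
  rw [inn_perm]

/-- existence of an equivariant hermitian projection onto an invariant subspace -/
lemma exists_proj (U : Submodule ℂ (X → ℂ)) (hU : Invt G U) :
    ∃ Q : (X → ℂ) →ₗ[ℂ] (X → ℂ),
      (∀ v, Q v ∈ U) ∧ (∀ u ∈ U, Q u = u) ∧ Equiv' (G := G) Q ∧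
      (∀ f h, inn (Q f) h = inn f (Q h)) ∧
      (∀ v, ∀ u ∈ U, inn u (v - Q v) = 0) := by
  classical
  let ℓ : EuclideanSpace ℂ X ≃ₗ[ℂ] (X → ℂ) := WithLp.linearEquiv 2 ℂ (X → ℂ)
  let UE : Submodule ℂ (EuclideanSpace ℂ X) := U.comap (ℓ : EuclideanSpace ℂ X →ₗ[ℂ] (X → ℂ))
  have hinn : ∀ f h : X → ℂ, inn f h = inner (𝕜 := ℂ) (ℓ.symm f) (ℓ.symm h) := by
    intro f h
    rw [PiLp.inner_apply]
    exact Finset.sum_congr rfl fun x _ => by rw [RCLike.inner_apply]; exact mul_comm _ _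
  have hmem : ∀ v : EuclideanSpace ℂ X, v ∈ UE ↔ ℓ v ∈ U := fun v => Iff.rfl
  have hmem' : ∀ v : X → ℂ, ℓ.symm v ∈ UE ↔ v ∈ U := by
    intro v; rw [hmem, ℓ.apply_symm_apply]
  let P := UE.orthogonalProjectionOnto
  let Q : (X → ℂ) →ₗ[ℂ] (X → ℂ) :=
    (ℓ : EuclideanSpace ℂ X →ₗ[ℂ] (X → ℂ)) ∘ₗ
      (UE.subtype ∘ₗ (P.toLinearMap ∘ₗ (ℓ.symm : (X → ℂ) →ₗ[ℂ] EuclideanSpace ℂ X)))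
  have hQapp : ∀ v : X → ℂ, Q v = ℓ ((P (ℓ.symm v) : EuclideanSpace ℂ X)) := fun v => rfl
  have hQmem : ∀ v, Q v ∈ U := by
    intro v; rw [hQapp]; exact (P (ℓ.symm v)).2
  have hQsymm : ∀ v : X → ℂ, ℓ.symm (Q v) = (P (ℓ.symm v) : EuclideanSpace ℂ X) := by
    intro v; rw [hQapp, ℓ.symm_apply_apply]
  have horth : ∀ v : X → ℂ, ∀ u ∈ U, inn u (v - Q v) = 0 := by
    intro v u hu
    rw [hinn, map_sub, hQsymm]
    exact (Submodule.mem_orthogonal UE _).mp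
      (Submodule.sub_starProjection_mem_orthogonal (K := UE) (ℓ.symm v)) (ℓ.symm u) ((hmem' u).mpr hu)
  refine ⟨Q, hQmem, ?_, ?_, ?_, horth⟩
  · intro u hu
    rw [hQapp]
    rw [show ((P (ℓ.symm u)) : EuclideanSpace ℂ X) = ℓ.symm u from
      Submodule.starProjection_eq_self_iff.mpr ((hmem' u).mpr hu), ℓ.apply_symm_apply]
  · intro g v
    rw [hQapp, hQapp]
    have key : (P (ℓ.symm (permRep G X g v)) : EuclideanSpace ℂ X)
        = ℓ.symm (permRep G X g (ℓ ((P (ℓ.symm v)) : EuclideanSpace ℂ X))) := by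
      show UE.starProjection (ℓ.symm (permRep G X g v)) = _
      apply Submodule.eq_starProjection_of_mem_orthogonal
      · rw [hmem, ℓ.apply_symm_apply]
        exact hU g _ (P (ℓ.symm v)).2
      · rw [Submodule.mem_orthogonal]
        intro u hu
        have e1 : ∀ z : X → ℂ, inner (𝕜 := ℂ) u (ℓ.symm z) = inn (ℓ u) z := by
          intro z; rw [hinn, ℓ.symm_apply_apply]
        rw [← map_sub, e1, ← map_sub, inn_perm_left, ← hQapp]
        exact horth v _ (hU g⁻¹ _ ((hmem _).mp hu))
    rw [key, ℓ.apply_symm_apply]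
  · intro f h
    rw [hinn, hinn, hQsymm, hQsymm]
    exact Submodule.inner_starProjection_left_eq_right (K := UE) _ _

end

end GarsiaAux
namespace GarsiaAux

open CST

variable {G X : Type*} [Group G] [Fintype X] [MulAction G X]

noncomputable section

lemma hermitian_ent {Q : (X → ℂ) →ₗ[ℂ] (X → ℂ)}
    (hQ : ∀ f h, inn (Q f) h = inn f (Q h)) (x y : X) :
    (starRingEnd ℂ) (ent Q x y) = ent Q y x := by
  have h1 : inn (Q (dl y)) (dl x) = inn (dl y) (Q (dl x)) := hQ _ _
  rw [inn_conj_symm, inn_dl_left] at h1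
  rw [inn_dl_left] at h1
  exact h1

/-- under HSym, every invariant subspace is conjugation-stable -/
lemma conj_mem_of_hsym (hs : HSym G X) {U : Submodule ℂ (X → ℂ)} (hU : Invt G U)
    {f : X → ℂ} (hf : f ∈ U) : cf f ∈ U := by
  obtain ⟨Q, hQmem, hQid, hQequiv, hQherm, -⟩ := exists_proj U hU
  have hreal : ∀ x y, (starRingEnd ℂ) (ent Q x y) = ent Q x y := by
    intro x y
    rw [hermitian_ent hQherm x y, ent_symm hs hQequiv y x]
  have hconj : Q (cf f) = cf (Q f) := by
    funext x
    rw [apply_eq_sum_ent]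
    show _ = (starRingEnd ℂ) (Q f x)
    rw [apply_eq_sum_ent, map_sum]
    refine Finset.sum_congr rfl fun y _ => ?_
    rw [map_mul, hreal]
    rfl
  have : Q (cf f) ∈ U := hQmem _
  rw [hconj, hQid f hf] at this
  exact this

lemma perm_real (g : G) (f : X → ℂ) (hf : ∀ x, (f x).im = 0) (x : X) :
    ((permRep G X g f) x).im = 0 := hf _

lemma cf_eq_self_of_real {f : X → ℂ} (hf : ∀ x, (f x).im = 0) : cf f = f := by
  funext x
  exact Complex.conj_eq_iff_im.mpr (hf x)

/-- conjugation-stable invariant subspaces give real subrepresentations -/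
lemma isRealRep_of_conj_stable {U : Submodule ℂ (X → ℂ)} (hU : Invt G U)
    (hconj : ∀ f ∈ U, cf f ∈ U) :
    IsRealRep (subRep (permRep G X) U hU) := by
  classical
  -- the set of real-valued elements of U spans U
  set σ : Set ↥U := {u : ↥U | ∀ x, ((u : X → ℂ) x).im = 0} with hσ
  have hspan : Submodule.span ℂ σ = ⊤ := by
    rw [Submodule.eq_top_iff']
    intro u
    set rp : X → ℂ := fun x => (((u : X → ℂ) x).re : ℂ) with hrp
    set ip : X → ℂ := fun x => (((u : X → ℂ) x).im : ℂ) with hip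
    have hrpU : rp ∈ U := by
      have : rp = (2 : ℂ)⁻¹ • ((u : X → ℂ) + cf (u : X → ℂ)) := by
        funext x
        simp only [hrp, Pi.smul_apply, Pi.add_apply, cf, smul_eq_mul]
        rw [Complex.add_conj]
        push_cast
        ring
      rw [this]
      exact Submodule.smul_mem _ _ (Submodule.add_mem _ u.2 (hconj _ u.2))
    have hipU : ip ∈ U := by
      have : ip = (-Complex.I / 2) • ((u : X → ℂ) - cf (u : X → ℂ)) := by
        funext x
        simp only [hip, Pi.smul_apply, Pi.sub_apply, cf, smul_eq_mul]
        rw [Complex.sub_conj]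
        push_cast
        linear_combination ((((u : X → ℂ) x).im : ℂ)) * Complex.I_sq
      rw [this]
      exact Submodule.smul_mem _ _ (Submodule.sub_mem _ u.2 (hconj _ u.2))
    have hdecomp : u = (⟨rp, hrpU⟩ : ↥U) + Complex.I • ⟨ip, hipU⟩ := by
      apply Subtype.ext
      show (u : X → ℂ) = rp + Complex.I • ip
      funext x
      simp only [Pi.add_apply, Pi.smul_apply, hrp, hip, smul_eq_mul]
      rw [mul_comm]
      exact (Complex.re_add_im _).symm
    rw [hdecomp]
    refine Submodule.add_mem _ ?_ (Submodule.smul_mem _ _ ?_)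
    · exact Submodule.subset_span (fun x => by simp [hrp])
    · exact Submodule.subset_span (fun x => by simp [hip])
  -- extract a basis from σ
  haveI : FiniteDimensional ℂ ↥U := inferInstance
  have hli : LinearIndepOn ℂ id (∅ : Set ↥U) := linearIndepOn_empty _ _
  set B := hli.extend (Set.empty_subset σ) with hB
  have hBsub : B ⊆ σ := hli.extend_subset _
  have hBli : LinearIndependent ℂ (fun x => x : B → ↥U) := hli.linearIndepOn_extend _
  have hBspan : Submodule.span ℂ B = ⊤ := by
    rw [hli.span_extend_eq_span (Set.empty_subset σ), hspan]
  let b : Basis B ℂ ↥U := Basis.mk hBli (by rw [Subtype.range_coe, hBspan])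
  haveI : Fintype B := FiniteDimensional.fintypeBasisIndex b
  let e : B ≃ Fin (Fintype.card B) := Fintype.equivFin B
  let b' : Basis (Fin (Fintype.card B)) ℂ ↥U := b.reindex e
  have hb'real : ∀ i, ∀ x, ((b' i : X → ℂ) x).im = 0 := by
    intro i x
    have h1 : b' i = b (e.symm i) := b.reindex_apply e i
    have h2 : b (e.symm i) = ((e.symm i : B) : ↥U) := Basis.mk_apply hBli _ _
    rw [h1, h2]
    exact hBsub (e.symm i).2 x
  refine ⟨Fintype.card B, b', ?_⟩
  intro g i j
  rw [LinearMap.toMatrix_apply]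
  set w : ↥U := subRep (permRep G X) U hU g (b' j) with hw
  have hwreal : ∀ x, ((w : X → ℂ) x).im = 0 := by
    intro x
    show ((permRep G X g (b' j : X → ℂ)) x).im = 0
    exact perm_real g _ (hb'real j) x
  have hsum : ∑ k, b'.repr w k • b' k = w := b'.sum_repr w
  have hsum2 : ∑ k, (starRingEnd ℂ) (b'.repr w k) • b' k = w := by
    apply Subtype.ext
    have hval : ((∑ k, (starRingEnd ℂ) (b'.repr w k) • b' k : ↥U) : X → ℂ)
        = ∑ k, (starRingEnd ℂ) (b'.repr w k) • (b' k : X → ℂ) := by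
      rw [Submodule.coe_sum]
      exact Finset.sum_congr rfl fun k _ => SetLike.val_smul _ _ _
    rw [hval]
    funext x
    have hval1 : (w : X → ℂ) x = ∑ k, b'.repr w k * (b' k : X → ℂ) x := by
      conv_lhs => rw [← hsum]
      rw [Submodule.coe_sum, Finset.sum_apply]
      exact Finset.sum_congr rfl fun k _ => rfl
    have hwc : (starRingEnd ℂ) ((w : X → ℂ) x) = (w : X → ℂ) x :=
      Complex.conj_eq_iff_im.mpr (hwreal x)
    rw [Finset.sum_apply]
    calc ∑ k, ((starRingEnd ℂ) (b'.repr w k) • (b' k : X → ℂ)) x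
        = ∑ k, (starRingEnd ℂ) (b'.repr w k * (b' k : X → ℂ) x) := by
          refine Finset.sum_congr rfl fun k _ => ?_
          rw [map_mul]
          simp only [Pi.smul_apply, smul_eq_mul]
          congr 1
          exact (Complex.conj_eq_iff_im.mpr (hb'real k x)).symm
      _ = (starRingEnd ℂ) ((w : X → ℂ) x) := by rw [← map_sum, ← hval1]
      _ = (w : X → ℂ) x := hwc
  have hrepr : ∀ k, (starRingEnd ℂ) (b'.repr w k) = b'.repr w k := by
    have h1 := b'.repr_sum_self (fun k => (starRingEnd ℂ) (b'.repr w k))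
    rw [hsum2] at h1
    intro k
    exact (congrFun h1 k).symm
  exact Complex.conj_eq_iff_im.mp (hrepr i)

/-- full reality statement under HSym -/
lemma isRealRep_of_hsym (hs : HSym G X) {U : Submodule ℂ (X → ℂ)} (hU : Invt G U) :
    IsRealRep (subRep (permRep G X) U hU) :=
  isRealRep_of_conj_stable hU (fun _ hf => conj_mem_of_hsym hs hU hf)

end

end GarsiaAux
namespace GarsiaAux

open CST

variable {G X : Type*} [Group G] [Fintype X] [MulAction G X]

noncomputable section

section proj

variable {m : ℕ} {U : Fin m → Submodule ℂ (X → ℂ)}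

/-- projection onto a summand of an internal direct sum, as a map to the subtype -/
def pr (hI : DirectSum.IsInternal U) (i : Fin m) : (X → ℂ) →ₗ[ℂ] ↥(U i) :=
  (DirectSum.component ℂ (Fin m) (fun k => ↥(U k)) i) ∘ₗ
    (LinearEquiv.ofBijective (DirectSum.coeLinearMap U) hI).symm.toLinearMap

lemma pr_of_mem (hI : DirectSum.IsInternal U) {i j : Fin m} {u : X → ℂ} (hu : u ∈ U j) :
    pr hI i u = if h : j = i then (⟨u, h ▸ hu⟩ : ↥(U i)) else 0 := by
  set E := LinearEquiv.ofBijective (DirectSum.coeLinearMap U) hI with hE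
  have h1 : E.symm u = DirectSum.of (fun k => ↥(U k)) j ⟨u, hu⟩ := by
    rw [LinearEquiv.symm_apply_eq]
    exact (DirectSum.coeLinearMap_of U j ⟨u, hu⟩).symm
  show DirectSum.component ℂ (Fin m) (fun k => ↥(U k)) i (E.symm u) = _
  rw [h1]
  have h2 : DirectSum.component ℂ (Fin m) (fun k => ↥(U k)) i
      (DirectSum.of (fun k => ↥(U k)) j (⟨u, hu⟩ : ↥(U j)))
      = if h : j = i then Eq.recOn h (⟨u, hu⟩ : ↥(U j)) else 0 :=
    DirectSum.component.of ℂ (M := fun k => ↥(U k)) i j (⟨u, hu⟩ : ↥(U j))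
  rw [h2]
  by_cases h : j = i
  · subst h; simp
  · simp [h]

lemma pr_self (hI : DirectSum.IsInternal U) {i : Fin m} {u : X → ℂ} (hu : u ∈ U i) :
    pr hI i u = ⟨u, hu⟩ := by
  rw [pr_of_mem hI hu]; simp

lemma pr_ne (hI : DirectSum.IsInternal U) {i j : Fin m} (hij : j ≠ i) {u : X → ℂ}
    (hu : u ∈ U j) : pr hI i u = 0 := by
  rw [pr_of_mem hI hu]; simp [hij]

lemma sum_pr (hI : DirectSum.IsInternal U) (v : X → ℂ) :
    ∑ i, ((pr hI i v : ↥(U i)) : X → ℂ) = v := by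
  set E := LinearEquiv.ofBijective (DirectSum.coeLinearMap U) hI with hE
  have h1 : v = DirectSum.coeLinearMap U (E.symm v) := (E.apply_symm_apply v).symm
  conv_rhs => rw [h1]
  conv_rhs => rw [← DirectSum.sum_univ_of (E.symm v)]
  rw [map_sum]
  exact Finset.sum_congr rfl fun i _ => (DirectSum.coeLinearMap_of U i _).symm

lemma pr_equivariant (hI : DirectSum.IsInternal U) (hU : ∀ i, Invt G (U i))
    (i : Fin m) (g : G) (v : X → ℂ) :
    ((pr hI i (permRep G X g v) : ↥(U i)) : X → ℂ)
      = permRep G X g ((pr hI i v : ↥(U i)) : X → ℂ) := by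
  have h1 : permRep G X g v = ∑ j, permRep G X g ((pr hI j v : ↥(U j)) : X → ℂ) := by
    rw [← map_sum, sum_pr]
  rw [h1, map_sum]
  rw [Finset.sum_eq_single i]
  · have : permRep G X g ((pr hI i v : ↥(U i)) : X → ℂ) ∈ U i := hU i g _ (pr hI i v).2
    rw [pr_self hI this]
  · intro j _ hj
    have : permRep G X g ((pr hI j v : ↥(U j)) : X → ℂ) ∈ U j := hU j g _ (pr hI j v).2
    rw [pr_ne hI hj this]
  · intro h; exact absurd (Finset.mem_univ i) h

/-- ambient projection -/
def prA (hI : DirectSum.IsInternal U) (i : Fin m) : (X → ℂ) →ₗ[ℂ] (X → ℂ) :=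
  (U i).subtype ∘ₗ pr hI i

lemma prA_equiv (hI : DirectSum.IsInternal U) (hU : ∀ i, Invt G (U i)) (i : Fin m) :
    Equiv' (G := G) (prA hI i) := fun g v => pr_equivariant hI hU i g v

end proj

lemma multFree_of_hsym (hs : HSym G X) : MultFree (permRep G X) := by
  intro m U hU hI hirr i j hij
  rintro ⟨e, he⟩
  -- S = projection onto U i, T = inclusion of e ∘ pr i
  set S : (X → ℂ) →ₗ[ℂ] (X → ℂ) := prA hI i with hS
  set T : (X → ℂ) →ₗ[ℂ] (X → ℂ) := (U j).subtype ∘ₗ e.toLinearMap ∘ₗ pr hI i with hT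
  have hUi : ∀ k, Invt G (U k) := fun k => hU k
  have hSe : Equiv' (G := G) S := prA_equiv hI hUi i
  have hTe : Equiv' (G := G) T := by
    intro g v
    show ((e (pr hI i (permRep G X g v)) : ↥(U j)) : X → ℂ)
      = permRep G X g ((e (pr hI i v) : ↥(U j)) : X → ℂ)
    have h1 : pr hI i (permRep G X g v) = subRep (permRep G X) (U i) (hU i) g (pr hI i v) := by
      apply Subtype.ext
      exact pr_equivariant hI hUi i g v
    rw [h1, he g (pr hI i v)]
    rfl
  have hcomm : S ∘ₗ T = T ∘ₗ S := comm_of_hsym hs hSe hTe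
  -- get a nonzero vector of U i
  haveI : Nontrivial ↥(U i) := (hirr i).1
  obtain ⟨u, hu⟩ := exists_ne (0 : ↥(U i))
  have h1 : (S ∘ₗ T) (u : X → ℂ) = 0 := by
    show prA hI i ((e (pr hI i (u : X → ℂ)) : ↥(U j)) : X → ℂ) = 0
    show ((pr hI i ((e (pr hI i (u : X → ℂ)) : ↥(U j)) : X → ℂ) : ↥(U i)) : X → ℂ) = 0
    rw [pr_ne hI (Ne.symm hij) (e (pr hI i (u : X → ℂ))).2]
    exact rfl
  have h2 : (T ∘ₗ S) (u : X → ℂ) = (e u : X → ℂ) := by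
    show ((e (pr hI i ((pr hI i (u : X → ℂ) : ↥(U i)) : X → ℂ)) : ↥(U j)) : X → ℂ) = _
    rw [pr_self hI (pr hI i (u : X → ℂ)).2]
    rw [pr_self hI u.2]
  have h3 : (e u : X → ℂ) = 0 := by rw [← h2, ← hcomm, h1]
  have h4 : e u = 0 := Subtype.ext h3
  exact hu ((LinearEquiv.map_eq_zero_iff e).mp h4)

end

end GarsiaAux
namespace GarsiaAux

open CST

variable {G X : Type*} [Group G] [Fintype X] [MulAction G X]

noncomputable section

lemma inn_add_right (f a b : X → ℂ) : inn f (a + b) = inn f a + inn f b := by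
  unfold inn
  rw [← Finset.sum_add_distrib]
  exact Finset.sum_congr rfl fun x _ => by show _ * (a x + b x) = _; ring

lemma inn_smul_right (f a : X → ℂ) (c : ℂ) : inn f (c • a) = c * inn f a := by
  unfold inn
  rw [Finset.mul_sum]
  exact Finset.sum_congr rfl fun x _ => by show _ * (c * a x) = _; ring

lemma inn_zero_right (f : X → ℂ) : inn f 0 = 0 := by
  unfold inn; simp

lemma inn_sum_right {ι : Type*} (s : Finset ι) (f : X → ℂ) (a : ι → X → ℂ) :
    inn f (∑ i ∈ s, a i) = ∑ i ∈ s, inn f (a i) := by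
  classical
  induction s using Finset.induction_on with
  | empty => simp [inn_zero_right]
  | insert _ _ hx ih => rw [Finset.sum_insert hx, Finset.sum_insert hx, inn_add_right, ih]

lemma inn_sub_right (f a b : X → ℂ) : inn f (a - b) = inn f a - inn f b := by
  unfold inn
  rw [← Finset.sum_sub_distrib]
  exact Finset.sum_congr rfl fun x _ => by show _ * (a x - b x) = _; ring

/-- the orthogonal complement with respect to `inn` -/
def perp (U : Submodule ℂ (X → ℂ)) : Submodule ℂ (X → ℂ) where
  carrier := {f | ∀ u ∈ U, inn u f = 0}
  zero_mem' := fun u _ => inn_zero_right u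
  add_mem' := by
    intro a b ha hb u hu
    rw [inn_add_right, ha u hu, hb u hu, add_zero]
  smul_mem' := by
    intro c a ha u hu
    rw [inn_smul_right, ha u hu, mul_zero]

lemma mem_perp {U : Submodule ℂ (X → ℂ)} {f : X → ℂ} :
    f ∈ perp U ↔ ∀ u ∈ U, inn u f = 0 := Iff.rfl

lemma perp_invt {U : Submodule ℂ (X → ℂ)} (hU : Invt G U) : Invt G (perp U) := by
  intro g f hf u hu
  rw [inn_perm_left]
  exact hf _ (hU g⁻¹ u hu)

/-- ambient form of irreducibility -/
lemma isIrr_iff (U : Submodule ℂ (X → ℂ)) (hU : Invt G U) :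
    IsIrreducible (subRep (permRep G X) U hU) ↔
      (U ≠ ⊥ ∧ ∀ S : Submodule ℂ (X → ℂ), S ≤ U → Invt G S → S = ⊥ ∨ S = U) := by
  constructor
  · rintro ⟨h1, h2⟩
    refine ⟨Submodule.nontrivial_iff_ne_bot.mp h1, ?_⟩
    intro S hSU hS
    have hS0 : ∀ (g : G), ∀ v ∈ S.comap U.subtype,
        subRep (permRep G X) U hU g v ∈ S.comap U.subtype := by
      intro g v hv
      show permRep G X g (v : X → ℂ) ∈ S
      exact hS g _ hv
    rcases h2 (S.comap U.subtype) hS0 with h | h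
    · left
      have := congrArg (Submodule.map U.subtype) h
      rw [Submodule.map_comap_subtype, Submodule.map_bot, inf_eq_right.mpr hSU] at this
      exact this
    · right
      have := congrArg (Submodule.map U.subtype) h
      rw [Submodule.map_comap_subtype, inf_eq_right.mpr hSU] at this
      rw [this]
      rw [Submodule.map_top, Submodule.range_subtype]
  · rintro ⟨h1, h2⟩
    refine ⟨Submodule.nontrivial_iff_ne_bot.mpr h1, ?_⟩
    intro S0 hS0
    have hinv : Invt G (S0.map U.subtype) := by
      rintro g f ⟨v, hv, rfl⟩
      exact ⟨subRep (permRep G X) U hU g v, hS0 g v hv, rfl⟩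
    rcases h2 (S0.map U.subtype) (Submodule.map_subtype_le U S0) hinv with h | h
    · left
      have := Submodule.map_injective_of_injective (Submodule.injective_subtype U)
        (M := ↥U)
      apply this
      rw [h, Submodule.map_bot]
    · right
      have hinj := Submodule.map_injective_of_injective (Submodule.injective_subtype U)
      apply hinj
      rw [h, Submodule.map_top, Submodule.range_subtype]

/-- existence of an irreducible invariant subspace -/
lemma exists_irred_le (W : Submodule ℂ (X → ℂ)) (hW : Invt G W) (hWne : W ≠ ⊥) :
    ∃ U₀ : Submodule ℂ (X → ℂ), U₀ ≠ ⊥ ∧ U₀ ≤ W ∧ Invt G U₀ ∧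
      (∀ S, S ≤ U₀ → Invt G S → S = ⊥ ∨ S = U₀) := by
  classical
  set P : ℕ → Prop := fun n => ∃ U₀ : Submodule ℂ (X → ℂ),
    U₀ ≠ ⊥ ∧ U₀ ≤ W ∧ Invt G U₀ ∧ Module.finrank ℂ ↥U₀ = n with hP
  have hPW : P (Module.finrank ℂ ↥W) := ⟨W, hWne, le_rfl, hW, rfl⟩
  have hex : ∃ n, P n := ⟨_, hPW⟩
  obtain ⟨U₀, hU₀ne, hU₀W, hU₀inv, hU₀rank⟩ := Nat.find_spec hex
  refine ⟨U₀, hU₀ne, hU₀W, hU₀inv, ?_⟩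
  intro S hSU hSinv
  by_cases hS : S = ⊥
  · exact Or.inl hS
  · right
    have hPS : P (Module.finrank ℂ ↥S) := ⟨S, hS, le_trans hSU hU₀W, hSinv, rfl⟩
    have h1 : Nat.find hex ≤ Module.finrank ℂ ↥S := Nat.find_le hPS
    exact Submodule.eq_of_le_of_finrank_le hSU (by rw [hU₀rank]; exact h1)

/-- orthogonal decomposition into irreducibles -/
lemma exists_orth_decomp :
    ∀ (n : ℕ) (W : Submodule ℂ (X → ℂ)), Module.finrank ℂ ↥W ≤ n → Invt G W →
    ∃ (m : ℕ) (U : Fin m → Submodule ℂ (X → ℂ)),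
      (∀ i, Invt G (U i)) ∧ (∀ i, U i ≤ W) ∧
      (∀ i, U i ≠ ⊥ ∧ ∀ S, S ≤ U i → Invt G S → S = ⊥ ∨ S = U i) ∧
      (∀ i j, i ≠ j → ∀ u ∈ U i, ∀ v ∈ U j, inn u v = 0) ∧
      (∀ w ∈ W, ∃ c : Fin m → (X → ℂ), (∀ i, c i ∈ U i) ∧ ∑ i, c i = w) := by
  intro n
  induction n with
  | zero =>
    intro W hrank hW
    have hWbot : W = ⊥ := by
      have : Module.finrank ℂ ↥W = 0 := Nat.le_zero.mp hrank
      exact Submodule.finrank_eq_zero.mp this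
    refine ⟨0, Fin.elim0, fun i => i.elim0, fun i => i.elim0, fun i => i.elim0,
      fun i => i.elim0, ?_⟩
    intro w hw
    refine ⟨Fin.elim0, fun i => i.elim0, ?_⟩
    rw [hWbot] at hw
    simp at hw ⊢
    exact hw.symm
  | succ n ih =>
    intro W hrank hW
    by_cases hWbot : W = ⊥
    · refine ⟨0, Fin.elim0, fun i => i.elim0, fun i => i.elim0, fun i => i.elim0,
        fun i => i.elim0, ?_⟩
      intro w hw
      refine ⟨Fin.elim0, fun i => i.elim0, ?_⟩
      rw [hWbot] at hw
      simp at hw ⊢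
      exact hw.symm
    · obtain ⟨U₀, hU₀ne, hU₀W, hU₀inv, hU₀irr⟩ := exists_irred_le W hW hWbot
      obtain ⟨Q, hQmem, hQid, hQequiv, hQherm, hQorth⟩ := exists_proj U₀ hU₀inv
      set W' : Submodule ℂ (X → ℂ) := W ⊓ perp U₀ with hW'
      have hW'inv : Invt G W' := by
        intro g f hf
        exact ⟨hW g f hf.1, perp_invt hU₀inv g f hf.2⟩
      have hW'lt : W' < W := by
        rw [lt_iff_le_and_ne]
        refine ⟨inf_le_left, ?_⟩
        intro hEq
        apply hU₀ne
        rw [Submodule.eq_bot_iff]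
        intro u hu
        have huW' : u ∈ W' := by rw [hEq]; exact hU₀W hu
        exact inn_self_eq_zero (huW'.2 u hu)
      have hrank' : Module.finrank ℂ ↥W' ≤ n := by
        have := Submodule.finrank_lt_finrank_of_lt hW'lt
        omega
      obtain ⟨m', U', hU'inv, hU'le, hU'irr, hU'orth, hU'dec⟩ := ih W' hrank' hW'inv
      refine ⟨m' + 1, Fin.cons U₀ U', ?_, ?_, ?_, ?_, ?_⟩
      · intro i
        refine Fin.cases ?_ ?_ i
        · rw [Fin.cons_zero]; exact hU₀inv
        · intro k; rw [Fin.cons_succ]; exact hU'inv k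
      · intro i
        refine Fin.cases ?_ ?_ i
        · rw [Fin.cons_zero]; exact hU₀W
        · intro k; rw [Fin.cons_succ]; exact le_trans (hU'le k) (le_trans inf_le_left le_rfl)
      · intro i
        refine Fin.cases ?_ ?_ i
        · rw [Fin.cons_zero]; exact ⟨hU₀ne, hU₀irr⟩
        · intro k; rw [Fin.cons_succ]; exact hU'irr k
      · intro i j
        refine Fin.cases ?_ (fun k => ?_) i <;> refine Fin.cases ?_ (fun l => ?_) j
        · intro hij; exact absurd rfl hij
        · intro _ u hu v hv
          rw [Fin.cons_zero] at hu; rw [Fin.cons_succ] at hv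
          exact (hU'le l hv).2 u hu
        · intro _ u hu v hv
          rw [Fin.cons_succ] at hu; rw [Fin.cons_zero] at hv
          rw [inn_conj_symm, (hU'le k hu).2 v hv, map_zero]
        · intro hij u hu v hv
          rw [Fin.cons_succ] at hu; rw [Fin.cons_succ] at hv
          exact hU'orth k l (fun h => hij (by rw [h])) u hu v hv
      · intro w hw
        have h1 : Q w ∈ U₀ := hQmem w
        have h2 : w - Q w ∈ W' := by
          constructor
          · exact Submodule.sub_mem W hw (hU₀W h1)
          · intro u hu
            exact hQorth w u hu
        obtain ⟨c', hc'mem, hc'sum⟩ := hU'dec _ h2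
        refine ⟨Fin.cons (Q w) c', ?_, ?_⟩
        · intro i
          refine Fin.cases ?_ ?_ i
          · rw [Fin.cons_zero, Fin.cons_zero]; exact h1
          · intro k; rw [Fin.cons_succ, Fin.cons_succ]; exact hc'mem k
        · rw [Fin.sum_cons, hc'sum]
          ring

end

end GarsiaAux
namespace GarsiaAux

open CST

variable {G X : Type*} [Group G] [Fintype X] [MulAction G X]

noncomputable section

lemma isInternal_of_orth {m : ℕ} {U : Fin m → Submodule ℂ (X → ℂ)}
    (horth : ∀ i j, i ≠ j → ∀ u ∈ U i, ∀ v ∈ U j, inn u v = 0)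
    (hdec : ∀ w : X → ℂ, ∃ c : Fin m → (X → ℂ), (∀ i, c i ∈ U i) ∧ ∑ i, c i = w) :
    DirectSum.IsInternal U := by
  constructor
  · -- injectivity
    intro d1 d2 h
    have hd : ∀ j, ((d1 - d2) j : X → ℂ) = 0 := by
      intro j
      set d := d1 - d2 with hdd
      have h0 : DirectSum.coeLinearMap U d = 0 := by
        rw [hdd, map_sub]
        rw [show DirectSum.coeLinearMap U d1 = DirectSum.coeLinearMap U d2 from h]
        exact sub_self _
      have hsum : DirectSum.coeLinearMap U d = ∑ i, ((d i : ↥(U i)) : X → ℂ) := by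
        conv_lhs => rw [← DirectSum.sum_univ_of d]
        rw [map_sum]
        exact Finset.sum_congr rfl fun i _ => DirectSum.coeLinearMap_of U i _
      have hzero : inn ((d j : ↥(U j)) : X → ℂ) ((d j : ↥(U j)) : X → ℂ) = 0 := by
        have h1 : inn ((d j : ↥(U j)) : X → ℂ) (∑ i, ((d i : ↥(U i)) : X → ℂ)) = 0 := by
          rw [← hsum, h0, inn_zero_right]
        rw [inn_sum_right] at h1
        rw [Finset.sum_eq_single j] at h1
        · exact h1
        · intro i _ hij
          exact horth j i (Ne.symm hij) _ (d j).2 _ (d i).2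
        · intro h'; exact absurd (Finset.mem_univ j) h'
      exact inn_self_eq_zero hzero
    apply DFinsupp.ext
    intro j
    have := hd j
    rw [DFinsupp.sub_apply] at this
    have h2 : d1 j - d2 j = 0 := Subtype.ext (this.trans (ZeroMemClass.coe_zero _).symm)
    exact sub_eq_zero.mp h2
  · -- surjectivity
    intro v
    obtain ⟨c, hc, hcsum⟩ := hdec v
    refine ⟨∑ i, DirectSum.of (fun k => ↥(U k)) i (⟨c i, hc i⟩ : ↥(U i)), ?_⟩
    rw [map_sum]
    rw [← hcsum]
    exact Finset.sum_congr rfl fun i _ => DirectSum.coeLinearMap_of U i _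

lemma prA_hermitian {m : ℕ} {U : Fin m → Submodule ℂ (X → ℂ)}
    (hI : DirectSum.IsInternal U)
    (horth : ∀ i j, i ≠ j → ∀ u ∈ U i, ∀ v ∈ U j, inn u v = 0) (i : Fin m) :
    ∀ f h, inn (prA hI i f) h = inn f (prA hI i h) := by
  have key : ∀ f h, inn (prA hI i f) h = inn (prA hI i f) (prA hI i h) := by
    intro f h
    conv_lhs => rw [show h = ∑ k, ((pr hI k h : ↥(U k)) : X → ℂ) from (sum_pr hI h).symm]
    rw [inn_sum_right]
    rw [Finset.sum_eq_single i]
    · rfl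
    · intro k _ hk
      exact horth i k (Ne.symm hk) (prA hI i f) (pr hI i f).2 _ (pr hI k h).2
    · intro h'; exact absurd (Finset.mem_univ i) h'
  have key2 : ∀ f h, inn f (prA hI i h) = inn (prA hI i f) (prA hI i h) := by
    intro f h
    conv_lhs => rw [show f = ∑ k, ((pr hI k f : ↥(U k)) : X → ℂ) from (sum_pr hI f).symm]
    rw [inn_conj_symm, inn_sum_right, map_sum]
    rw [Finset.sum_eq_single i]
    · rw [← inn_conj_symm]; rfl
    · intro k _ hk
      rw [horth i k (Ne.symm hk) (prA hI i h) (pr hI i h).2 ((pr hI k f : ↥(U k)) : X → ℂ) (pr hI k f).2, map_zero]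
    · intro h'; exact absurd (Finset.mem_univ i) h'
  intro f h
  rw [key f h, key2 f h]

/-- decomposition uniqueness: components are determined -/
lemma prA_eq_of_sum {m : ℕ} {U : Fin m → Submodule ℂ (X → ℂ)}
    (hI : DirectSum.IsInternal U) {w : Fin m → (X → ℂ)} (hw : ∀ k, w k ∈ U k)
    {v : X → ℂ} (hv : ∑ k, w k = v) (j : Fin m) : prA hI j v = w j := by
  rw [← hv]
  show ((pr hI j (∑ k, w k) : ↥(U j)) : X → ℂ) = w j
  rw [map_sum]
  rw [Finset.sum_eq_single j]
  · rw [pr_self hI (hw j)]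
  · intro k _ hk
    rw [pr_ne hI hk (hw k)]
  · intro h'; exact absurd (Finset.mem_univ j) h'

section schur

variable {U W : Submodule ℂ (X → ℂ)}

/-- Schur: nonzero intertwiner between irreducibles is an equivalence -/
lemma schur_equiv {hU : Invt G U} {hW : Invt G W}
    (hUirr : IsIrreducible (subRep (permRep G X) U hU))
    (hWirr : IsIrreducible (subRep (permRep G X) W hW))
    (A : ↥U →ₗ[ℂ] ↥W)
    (hA : ∀ (g : G) (v : ↥U),
      A (subRep (permRep G X) U hU g v) = subRep (permRep G X) W hW g (A v))
    (hA0 : A ≠ 0) :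
    RepEquiv (subRep (permRep G X) U hU) (subRep (permRep G X) W hW) := by
  have hker : ∀ (g : G), ∀ v ∈ LinearMap.ker A, subRep (permRep G X) U hU g v ∈ LinearMap.ker A := by
    intro g v hv
    rw [LinearMap.mem_ker, hA, LinearMap.mem_ker.mp hv, map_zero]
  have hrange : ∀ (g : G), ∀ w ∈ LinearMap.range A, subRep (permRep G X) W hW g w ∈ LinearMap.range A := by
    rintro g w ⟨v, rfl⟩
    exact ⟨subRep (permRep G X) U hU g v, (hA g v).symm ▸ rfl⟩
  rcases hUirr.2 (LinearMap.ker A) hker with hk | hk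
  · rcases hWirr.2 (LinearMap.range A) hrange with hr | hr
    · exact absurd (LinearMap.range_eq_bot.mp hr) hA0
    · exact ⟨LinearEquiv.ofBijective A
        ⟨LinearMap.ker_eq_bot.mp hk, LinearMap.range_eq_top.mp hr⟩, hA⟩
  · exact absurd (LinearMap.ker_eq_top.mp hk) hA0

/-- Schur: equivariant endomorphism of an irreducible is scalar -/
lemma schur_scalar {hU : Invt G U}
    (hUirr : IsIrreducible (subRep (permRep G X) U hU))
    (A : ↥U →ₗ[ℂ] ↥U)
    (hA : ∀ (g : G) (v : ↥U),
      A (subRep (permRep G X) U hU g v) = subRep (permRep G X) U hU g (A v)) :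
    ∃ lam : ℂ, ∀ v : ↥U, A v = lam • v := by
  haveI : Nontrivial ↥U := hUirr.1
  obtain ⟨c, hc⟩ := Module.End.exists_eigenvalue (A : Module.End ℂ ↥U)
  refine ⟨c, ?_⟩
  have hker : ∀ (g : G), ∀ v ∈ Module.End.eigenspace (A : Module.End ℂ ↥U) c,
      subRep (permRep G X) U hU g v ∈ Module.End.eigenspace (A : Module.End ℂ ↥U) c := by
    intro g v hv
    rw [Module.End.mem_eigenspace_iff] at hv ⊢
    rw [hA, hv, map_smul]
  rcases hUirr.2 _ hker with hk | hk
  · exact absurd hk hc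
  · intro v
    have : v ∈ Module.End.eigenspace (A : Module.End ℂ ↥U) c := hk ▸ Submodule.mem_top
    exact Module.End.mem_eigenspace_iff.mp this

end schur

/-- RepEquiv is symmetric -/
lemma repEquiv_symm {k V W : Type*} [CommRing k] [AddCommGroup V] [Module k V]
    [AddCommGroup W] [Module k W] {σ : Representation k G V} {τ : Representation k G W}
    (h : RepEquiv σ τ) : RepEquiv τ σ := by
  obtain ⟨e, he⟩ := h
  refine ⟨e.symm, ?_⟩
  intro g w
  apply e.injective
  rw [he, e.apply_symm_apply, e.apply_symm_apply]

/-- RepEquiv is transitive -/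
lemma repEquiv_trans {k V W Z : Type*} [CommRing k] [AddCommGroup V] [Module k V]
    [AddCommGroup W] [Module k W] [AddCommGroup Z] [Module k Z]
    {σ : Representation k G V} {τ : Representation k G W} {υ : Representation k G Z}
    (h1 : RepEquiv σ τ) (h2 : RepEquiv τ υ) : RepEquiv σ υ := by
  obtain ⟨e1, he1⟩ := h1
  obtain ⟨e2, he2⟩ := h2
  refine ⟨e1.trans e2, ?_⟩
  intro g v
  show e2 (e1 (σ g v)) = υ g (e2 (e1 v))
  rw [he1, he2]

/-- equality of submodules gives RepEquiv of the subreps -/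
lemma repEquiv_of_eq {U W : Submodule ℂ (X → ℂ)} (hUW : U = W)
    (hU : Invt G U) (hW : Invt G W) :
    RepEquiv (subRep (permRep G X) U hU) (subRep (permRep G X) W hW) := by
  subst hUW
  exact ⟨LinearEquiv.refl ℂ ↥U, fun g v => rfl⟩

end

end GarsiaAux
namespace GarsiaAux

open CST

variable {G X : Type*} [Group G] [Fintype X] [MulAction G X]

noncomputable section

lemma cf_add (f h : X → ℂ) : cf (f + h) = cf f + cf h := by
  funext x; exact map_add _ _ _

lemma cf_smul (a : ℂ) (f : X → ℂ) : cf (a • f) = (starRingEnd ℂ) a • cf f := by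
  funext x; exact map_mul _ _ _

lemma cf_zero : cf (0 : X → ℂ) = 0 := by
  funext x; exact map_zero _

lemma cf_cf (f : X → ℂ) : cf (cf f) = f := by
  funext x; exact Complex.conj_conj _

lemma cf_sum {ι : Type*} (s : Finset ι) (a : ι → X → ℂ) :
    cf (∑ i ∈ s, a i) = ∑ i ∈ s, cf (a i) := by
  classical
  induction s using Finset.induction_on with
  | empty => simpa using cf_zero
  | insert _ _ hx ih => rw [Finset.sum_insert hx, Finset.sum_insert hx, cf_add, ih]

lemma cf_perm (g : G) (f : X → ℂ) : cf (permRep G X g f) = permRep G X g (cf f) := rfl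

lemma cf_eq_zero_iff {f : X → ℂ} : cf f = 0 ↔ f = 0 := by
  constructor
  · intro h; rw [← cf_cf f, h, cf_zero]
  · intro h; rw [h, cf_zero]

/-- the conjugate submodule -/
def cSub (U : Submodule ℂ (X → ℂ)) : Submodule ℂ (X → ℂ) where
  carrier := {f | cf f ∈ U}
  zero_mem' := by show cf 0 ∈ U; rw [cf_zero]; exact U.zero_mem
  add_mem' := by
    intro a b ha hb
    show cf (a + b) ∈ U
    rw [cf_add]; exact U.add_mem ha hb
  smul_mem' := by
    intro c a ha
    show cf (c • a) ∈ U
    rw [cf_smul]; exact U.smul_mem _ ha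

lemma mem_cSub {U : Submodule ℂ (X → ℂ)} {f : X → ℂ} : f ∈ cSub U ↔ cf f ∈ U := Iff.rfl

lemma cf_mem_cSub {U : Submodule ℂ (X → ℂ)} {f : X → ℂ} (hf : f ∈ U) : cf f ∈ cSub U := by
  rw [mem_cSub, cf_cf]; exact hf

lemma cSub_cSub (U : Submodule ℂ (X → ℂ)) : cSub (cSub U) = U := by
  ext f
  rw [mem_cSub, mem_cSub, cf_cf]

lemma cSub_mono {U W : Submodule ℂ (X → ℂ)} (h : U ≤ W) : cSub U ≤ cSub W :=
  fun _ hf => h hf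

lemma cSub_bot : cSub (⊥ : Submodule ℂ (X → ℂ)) = ⊥ := by
  ext f
  rw [mem_cSub, Submodule.mem_bot, Submodule.mem_bot, cf_eq_zero_iff]

lemma cSub_invt {U : Submodule ℂ (X → ℂ)} (hU : Invt G U) : Invt G (cSub U) := by
  intro g f hf
  show cf (permRep G X g f) ∈ U
  rw [cf_perm]
  exact hU g _ hf

lemma cSub_ne_bot {U : Submodule ℂ (X → ℂ)} (hU : U ≠ ⊥) : cSub U ≠ ⊥ := by
  intro h
  apply hU
  rw [← cSub_cSub U, h, cSub_bot]

lemma cSub_irr {U : Submodule ℂ (X → ℂ)}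
    (hirr : ∀ S, S ≤ U → Invt G S → S = ⊥ ∨ S = U) :
    ∀ S, S ≤ cSub U → Invt G S → S = ⊥ ∨ S = cSub U := by
  intro S hS hSinv
  have h1 : cSub S ≤ U := by
    have := cSub_mono hS
    rwa [cSub_cSub] at this
  rcases hirr (cSub S) h1 (cSub_invt hSinv) with h | h
  · left
    rw [← cSub_cSub S, h, cSub_bot]
  · right
    rw [← cSub_cSub S, h]

/-- a real subrepresentation is equivalent to its conjugate -/
lemma repEquiv_cSub_of_real {U : Submodule ℂ (X → ℂ)} (hU : Invt G U)
    (hcU : Invt G (cSub U))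
    (hreal : IsRealRep (subRep (permRep G X) U hU)) :
    RepEquiv (subRep (permRep G X) U hU) (subRep (permRep G X) (cSub U) hcU) := by
  obtain ⟨n, b, hm⟩ := hreal
  -- conjugate basis vectors
  set cb : Fin n → ↥(cSub U) := fun k => ⟨cf ((b k : ↥U) : X → ℂ), cf_mem_cSub (b k).2⟩
    with hcb
  -- linear independence
  have hli : LinearIndependent ℂ cb := by
    rw [Fintype.linearIndependent_iff]
    intro a ha
    have h0 := congrArg (Subtype.val : ↥(cSub U) → (X → ℂ)) ha
    rw [Submodule.coe_sum] at h0
    have hval : ∑ k, a k • cf ((b k : ↥U) : X → ℂ) = (0 : X → ℂ) :=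
      (Finset.sum_congr rfl fun k _ => rfl).symm.trans h0
    have hcfval : (0 : X → ℂ) = ∑ k, (starRingEnd ℂ) (a k) • ((b k : ↥U) : X → ℂ) := by
      have h1 := congrArg cf hval.symm
      rw [cf_zero, cf_sum] at h1
      refine h1.trans (Finset.sum_congr rfl fun k _ => ?_)
      rw [cf_smul, cf_cf]
    have hsub : (0 : ↥U) = ∑ k, (starRingEnd ℂ) (a k) • b k := by
      apply Subtype.ext
      rw [Submodule.coe_sum]
      exact hcfval.trans (Finset.sum_congr rfl fun k _ => rfl)
    have hz := Fintype.linearIndependent_iff.mp b.linearIndependent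
      (fun k => (starRingEnd ℂ) (a k)) hsub.symm
    intro k
    have := hz k
    rwa [map_eq_zero] at this
  -- spanning
  have hspan : ⊤ ≤ Submodule.span ℂ (Set.range cb) := by
    intro u _
    have h1 : cf (u : X → ℂ) ∈ U := (mem_cSub.mp u.2)
    set r := b.repr ⟨cf (u : X → ℂ), h1⟩ with hr
    have h2 : (⟨cf (u : X → ℂ), h1⟩ : ↥U) = ∑ k, r k • b k := (b.sum_repr _).symm
    have h3 : (u : X → ℂ) = ∑ k, (starRingEnd ℂ) (r k) • cf ((b k : ↥U) : X → ℂ) := by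
      have hval := congrArg (Subtype.val : ↥U → (X → ℂ)) h2
      rw [Submodule.coe_sum] at hval
      have := congrArg cf hval
      rw [cf_cf, cf_sum] at this
      rw [this]
      refine Finset.sum_congr rfl fun k _ => ?_
      rw [show ((r k • b k : ↥U) : X → ℂ) = r k • ((b k : ↥U) : X → ℂ) from rfl, cf_smul]
    have h4 : u = ∑ k, (starRingEnd ℂ) (r k) • cb k := by
      apply Subtype.ext
      rw [Submodule.coe_sum, h3]
      exact Finset.sum_congr rfl fun k _ => rfl
    rw [h4]
    exact Submodule.sum_mem _ fun k _ =>
      Submodule.smul_mem _ _ (Submodule.subset_span ⟨k, rfl⟩)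
  set b2 : Basis (Fin n) ℂ ↥(cSub U) := Basis.mk hli hspan with hb2
  set e : ↥U ≃ₗ[ℂ] ↥(cSub U) := b.equiv b2 (Equiv.refl _) with he
  have he_apply : ∀ k, e (b k) = cb k := by
    intro k
    rw [he, b.equiv_apply, Equiv.refl_apply, hb2, Basis.mk_apply]
  refine ⟨e, ?_⟩
  intro g v
  have hcomp : e.toLinearMap ∘ₗ (subRep (permRep G X) U hU g : ↥U →ₗ[ℂ] ↥U)
      = (subRep (permRep G X) (cSub U) hcU g : ↥(cSub U) →ₗ[ℂ] ↥(cSub U)) ∘ₗ e.toLinearMap := by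
    apply b.ext
    intro k
    show e (subRep (permRep G X) U hU g (b k)) = subRep (permRep G X) (cSub U) hcU g (e (b k))
    -- expand in basis
    set M : Fin n → ℂ := fun l => b.repr (subRep (permRep G X) U hU g (b k)) l with hM
    have hMreal : ∀ l, (starRingEnd ℂ) (M l) = M l := by
      intro l
      apply Complex.conj_eq_iff_im.mpr
      have := hm g l k
      rwa [LinearMap.toMatrix_apply] at this
    have h5 : subRep (permRep G X) U hU g (b k) = ∑ l, M l • b l := (b.sum_repr _).symm
    have h6 : permRep G X g ((b k : ↥U) : X → ℂ) = ∑ l, M l • ((b l : ↥U) : X → ℂ) := by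
      have h6a := congrArg (Subtype.val : ↥U → (X → ℂ)) h5
      rw [Submodule.coe_sum] at h6a
      rw [show permRep G X g ((b k : ↥U) : X → ℂ)
        = ((subRep (permRep G X) U hU g (b k) : ↥U) : X → ℂ) from rfl, h6a]
      exact Finset.sum_congr rfl fun l _ => rfl
    have h8 : e (subRep (permRep G X) U hU g (b k)) = ∑ l, M l • cb l := by
      rw [h5, map_sum]
      exact Finset.sum_congr rfl fun l _ => by rw [map_smul, he_apply l]
    rw [h8, he_apply k]
    apply Subtype.ext
    show ((∑ l, M l • cb l : ↥(cSub U)) : X → ℂ) = permRep G X g ((cb k : X → ℂ))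
    rw [Submodule.coe_sum]
    calc ∑ l, ((M l • cb l : ↥(cSub U)) : X → ℂ)
        = ∑ l, M l • cf ((b l : ↥U) : X → ℂ) := Finset.sum_congr rfl fun l _ => rfl
      _ = ∑ l, cf (M l • ((b l : ↥U) : X → ℂ)) := by
            refine Finset.sum_congr rfl fun l _ => ?_
            rw [cf_smul, hMreal l]
      _ = cf (∑ l, M l • ((b l : ↥U) : X → ℂ)) := (cf_sum _ _).symm
      _ = cf (permRep G X g ((b k : ↥U) : X → ℂ)) := by rw [h6]
      _ = permRep G X g ((cb k : X → ℂ)) := by rw [cf_perm]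
  exact LinearMap.congr_fun hcomp v

end

end GarsiaAux
namespace GarsiaAux

open CST

variable {G X : Type*} [Group G] [Fintype X] [MulAction G X]

noncomputable section

lemma cf_dl (b : X) : cf (dl b : X → ℂ) = dl b := by
  funext x
  show (starRingEnd ℂ) (dl b x) = dl b x
  unfold dl
  by_cases h : x = b
  · rw [if_pos h, map_one]
  · rw [if_neg h, map_zero]

/-- with multiplicity-freeness, irreducible invariant subspaces coincide with summands -/
lemma unique_irred (hmf : MultFree (permRep G X))
    {m : ℕ} {U : Fin m → Submodule ℂ (X → ℂ)} (hU : ∀ i, Invt G (U i))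
    (hI : DirectSum.IsInternal U)
    (hirr : ∀ i, IsIrreducible (subRep (permRep G X) (U i) (hU i)))
    {W : Submodule ℂ (X → ℂ)} (hWinv : Invt G W)
    (hWne : W ≠ ⊥) (hWirr : ∀ S, S ≤ W → Invt G S → S = ⊥ ∨ S = W) :
    ∃ j, W = U j := by
  classical
  set A : ∀ j, ↥W →ₗ[ℂ] ↥(U j) := fun j => (pr hI j) ∘ₗ W.subtype with hA
  have hAeq : ∀ (j : Fin m) (g : G) (w : ↥W),
      A j (subRep (permRep G X) W hWinv g w) = subRep (permRep G X) (U j) (hU j) g (A j w) := by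
    intro j g w
    apply Subtype.ext
    show ((pr hI j (permRep G X g (w : X → ℂ)) : ↥(U j)) : X → ℂ)
      = permRep G X g ((pr hI j (w : X → ℂ) : ↥(U j)) : X → ℂ)
    exact pr_equivariant hI hU j g _
  have hWirrFull : IsIrreducible (subRep (permRep G X) W hWinv) :=
    (isIrr_iff W hWinv).mpr ⟨hWne, hWirr⟩
  have hex : ∃ j, A j ≠ 0 := by
    by_contra hall
    push_neg at hall
    apply hWne
    rw [Submodule.eq_bot_iff]
    intro w hw
    have h1 : w = ∑ j, ((pr hI j w : ↥(U j)) : X → ℂ) := (sum_pr hI w).symm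
    rw [h1]
    apply Finset.sum_eq_zero
    intro j _
    have : pr hI j w = A j ⟨w, hw⟩ := rfl
    rw [this, hall j]
    rfl
  obtain ⟨j, hAj⟩ := hex
  have eqvj := schur_equiv hWirrFull (hirr j) (A j) (hAeq j) hAj
  have hAk : ∀ k, k ≠ j → A k = 0 := by
    intro k hk
    by_contra hA0
    have eqvk := schur_equiv hWirrFull (hirr k) (A k) (hAeq k) hA0
    exact hmf m U hU hI hirr j k (Ne.symm hk) (repEquiv_trans (repEquiv_symm eqvj) eqvk)
  have hWle : W ≤ U j := by
    intro w hw
    have h1 : w = ∑ k, ((pr hI k w : ↥(U k)) : X → ℂ) := (sum_pr hI w).symm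
    rw [h1, Finset.sum_eq_single j]
    · exact (pr hI j w).2
    · intro k _ hk
      have : pr hI k w = A k ⟨w, hw⟩ := rfl
      rw [this, hAk k hk]
      rfl
    · intro h'; exact absurd (Finset.mem_univ j) h'
  have hamb := (isIrr_iff (U j) (hU j)).mp (hirr j)
  rcases hamb.2 W hWle hWinv with h | h
  · exact absurd h hWne
  · exact ⟨j, h⟩

open Classical in
/-- the orbit operator for the diagonal orbit of `(x, y)` -/
def orbOp (G : Type*) [Group G] {X : Type*} [Fintype X] [MulAction G X] (x y : X) :
    (X → ℂ) →ₗ[ℂ] (X → ℂ) where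
  toFun f := fun x' => ∑ y', (if ∃ g : G, (x', y') = (g • x, g • y) then (1:ℂ) else 0) * f y'
  map_add' f1 f2 := by
    funext x'
    show ∑ y', _ * (f1 y' + f2 y') = (∑ y', _ * f1 y') + ∑ y', _ * f2 y'
    rw [← Finset.sum_add_distrib]
    exact Finset.sum_congr rfl fun y' _ => mul_add _ _ _
  map_smul' c f := by
    funext x'
    show ∑ y', _ * (c * f y') = c * ∑ y', _ * f y'
    rw [Finset.mul_sum]
    exact Finset.sum_congr rfl fun y' _ => by ring

open Classical in
lemma orbOp_ent (x y a b : X) :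
    ent (orbOp G x y) a b = if ∃ g : G, ((a : X), b) = (g • x, g • y) then (1:ℂ) else 0 := by
  show ∑ y', (if ∃ g : G, ((a : X), y') = (g • x, g • y) then (1:ℂ) else 0) * dl b y' = _
  rw [Finset.sum_eq_single b]
  · show _ * (if b = b then (1:ℂ) else 0) = _
    rw [if_pos rfl, mul_one]
  · intro y' _ hy'
    show _ * (if y' = b then (1:ℂ) else 0) = 0
    rw [if_neg hy', mul_zero]
  · intro h'; exact absurd (Finset.mem_univ b) h'

open Classical in
lemma orbOp_equiv (x y : X) : Equiv' (G := G) (orbOp G x y) := by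
  intro g f
  funext x'
  show ∑ y', (if ∃ h : G, ((x' : X), y') = (h • x, h • y) then (1:ℂ) else 0) * f (g⁻¹ • y')
      = ∑ z, (if ∃ h : G, ((g⁻¹ • x' : X), z) = (h • x, h • y) then (1:ℂ) else 0) * f z
  rw [← Equiv.sum_comp (MulAction.toPerm g)
    (fun y' => (if ∃ h : G, ((x' : X), y') = (h • x, h • y) then (1:ℂ) else 0) * f (g⁻¹ • y'))]
  refine Finset.sum_congr rfl fun z _ => ?_
  have h1 : (MulAction.toPerm g : X ≃ X) z = g • z := rfl
  rw [h1]
  have h2 : g⁻¹ • (g • z) = z := inv_smul_smul g z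
  rw [h2]
  congr 1
  have hiff : (∃ h : G, ((x' : X), g • z) = (h • x, h • y))
      ↔ (∃ h : G, ((g⁻¹ • x' : X), z) = (h • x, h • y)) := by
    constructor
    · rintro ⟨h, hh⟩
      simp only [Prod.mk.injEq] at hh
      refine ⟨g⁻¹ * h, ?_⟩
      simp only [Prod.mk.injEq]
      constructor
      · show g⁻¹ • x' = (g⁻¹ * h) • x
        rw [mul_smul, ← hh.1]
      · show z = (g⁻¹ * h) • y
        rw [mul_smul, ← hh.2, inv_smul_smul]
    · rintro ⟨h, hh⟩
      simp only [Prod.mk.injEq] at hh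
      refine ⟨g * h, ?_⟩
      simp only [Prod.mk.injEq]
      constructor
      · show x' = (g * h) • x
        rw [mul_smul, ← hh.1, smul_inv_smul]
      · show g • z = (g * h) • y
        rw [mul_smul, ← hh.2]
  rw [if_congr hiff rfl rfl]

/-- converse: Gelfand + reality implies the symmetry condition -/
lemma hsym_of_gelfand (hmf : MultFree (permRep G X))
    (hreal : ∀ (Us : Submodule ℂ (X → ℂ)) (hUs : ∀ (g : G), ∀ f ∈ Us, permRep G X g f ∈ Us),
      IsIrreducible (subRep (permRep G X) Us hUs) → IsRealRep (subRep (permRep G X) Us hUs)) :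
    HSym G X := by
  classical
  obtain ⟨m, U, hUinv, hUle, hUirrAmb, hUorth, hUdec⟩ :=
    exists_orth_decomp (G := G) (Module.finrank ℂ ↥(⊤ : Submodule ℂ (X → ℂ))) ⊤ le_rfl
      (fun g f _ => Submodule.mem_top)
  have hI : DirectSum.IsInternal U :=
    isInternal_of_orth hUorth (fun w => hUdec w Submodule.mem_top)
  have hirrS : ∀ i, IsIrreducible (subRep (permRep G X) (U i) (hUinv i)) :=
    fun i => (isIrr_iff _ _).mpr (hUirrAmb i)
  -- conjugation stability of the summands
  have hconj : ∀ i, cSub (U i) = U i := by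
    intro i
    have hcinv := cSub_invt (hUinv i)
    have hcne := cSub_ne_bot (hUirrAmb i).1
    have hcirr := cSub_irr (hUirrAmb i).2
    obtain ⟨j, hj⟩ := unique_irred hmf hUinv hI hirrS hcinv hcne hcirr
    by_cases hij : j = i
    · rw [hj, hij]
    · exfalso
      have e1 : RepEquiv (subRep (permRep G X) (U i) (hUinv i))
          (subRep (permRep G X) (cSub (U i)) hcinv) :=
        repEquiv_cSub_of_real (hUinv i) hcinv (hreal (U i) (hUinv i) (hirrS i))
      have e2 : RepEquiv (subRep (permRep G X) (cSub (U i)) hcinv)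
          (subRep (permRep G X) (U j) (hUinv j)) :=
        repEquiv_of_eq hj hcinv (hUinv j)
      exact hmf m U hUinv hI hirrS i j (Ne.symm hij) (repEquiv_trans e1 e2)
  -- the projections commute with conjugation
  have hprconj : ∀ (i : Fin m) (v : X → ℂ), cf (prA hI i v) = prA hI i (cf v) := by
    intro i v
    have hw : ∀ k, cf (prA hI k v) ∈ U k := by
      intro k
      rw [← hconj k]
      exact cf_mem_cSub (pr hI k v).2
    have hsumv : ∑ k, cf (prA hI k v) = cf v := by
      rw [← cf_sum]
      exact congrArg cf (sum_pr hI v)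
    exact (prA_eq_of_sum hI hw hsumv i).symm
  -- entries of the projections are symmetric
  have hprA_sym : ∀ (i : Fin m) (a b1 : X), ent (prA hI i) a b1 = ent (prA hI i) b1 a := by
    intro i a b1
    have hherm := hermitian_ent (prA_hermitian hI hUorth i) a b1
    have hrealent : (starRingEnd ℂ) (ent (prA hI i) a b1) = ent (prA hI i) a b1 := by
      show (starRingEnd ℂ) (prA hI i (dl b1) a) = prA hI i (dl b1) a
      have h1 : cf (prA hI i (dl b1)) = prA hI i (dl b1) := by
        rw [hprconj i (dl b1), cf_dl]
      exact congrFun h1 a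
    rw [← hherm, hrealent]
  -- equivariant operators act as scalars on summands
  have hscal : ∀ (T : (X → ℂ) →ₗ[ℂ] (X → ℂ)), Equiv' (G := G) T →
      ∀ i, ∃ lam : ℂ, ∀ u, ∀ hu : u ∈ U i, T u = lam • u := by
    intro T hT i
    set B : ∀ k, ↥(U i) →ₗ[ℂ] ↥(U k) := fun k => (pr hI k) ∘ₗ (T ∘ₗ (U i).subtype) with hB
    have hBeq : ∀ (k : Fin m) (g : G) (u : ↥(U i)),
        B k (subRep (permRep G X) (U i) (hUinv i) g u)
          = subRep (permRep G X) (U k) (hUinv k) g (B k u) := by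
      intro k g u
      apply Subtype.ext
      show ((pr hI k (T (permRep G X g (u : X → ℂ))) : ↥(U k)) : X → ℂ)
        = permRep G X g ((pr hI k (T (u : X → ℂ)) : ↥(U k)) : X → ℂ)
      rw [hT g]
      exact pr_equivariant hI hUinv k g _
    have hBzero : ∀ k, k ≠ i → B k = 0 := by
      intro k hk
      by_contra hB0
      exact hmf m U hUinv hI hirrS i k (Ne.symm hk)
        (schur_equiv (hirrS i) (hirrS k) (B k) (hBeq k) hB0)
    obtain ⟨lam, hlam⟩ := schur_scalar (hirrS i) (B i) (hBeq i)
    refine ⟨lam, ?_⟩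
    intro u hu
    have h1 : T u = ∑ k, ((B k ⟨u, hu⟩ : ↥(U k)) : X → ℂ) := (sum_pr hI (T u)).symm
    rw [h1, Finset.sum_eq_single i]
    · rw [hlam ⟨u, hu⟩]
      rfl
    · intro k _ hk
      rw [hBzero k hk]
      rfl
    · intro h'; exact absurd (Finset.mem_univ i) h'
  -- all equivariant operators have symmetric matrices
  have hsymm : ∀ (T : (X → ℂ) →ₗ[ℂ] (X → ℂ)), Equiv' (G := G) T →
      ∀ a b1, ent T a b1 = ent T b1 a := by
    intro T hT a b1
    choose lam hlam using hscal T hT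
    have hTfor : ∀ v, T v = ∑ i, lam i • prA hI i v := by
      intro v
      conv_lhs => rw [← sum_pr hI v]
      rw [map_sum]
      exact Finset.sum_congr rfl fun i _ => hlam i _ (pr hI i v).2
    have hent : ∀ a' b', ent T a' b' = ∑ i, lam i * ent (prA hI i) a' b' := by
      intro a' b'
      show T (dl b') a' = _
      rw [hTfor (dl b'), Finset.sum_apply]
      exact Finset.sum_congr rfl fun i _ => rfl
    rw [hent, hent]
    exact Finset.sum_congr rfl fun i _ => by rw [hprA_sym i a b1]
  -- conclude
  intro x y
  have hM := hsymm (orbOp G x y) (orbOp_equiv x y) y x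
  rw [orbOp_ent, orbOp_ent] at hM
  have h1 : (∃ g : G, ((x : X), y) = (g • x, g • y)) := ⟨1, by simp⟩
  rw [if_pos h1] at hM
  by_cases h2 : ∃ g : G, ((y : X), x) = (g • x, g • y)
  · obtain ⟨g, hg⟩ := h2
    simp only [Prod.mk.injEq] at hg
    exact ⟨g, hg.1.symm, hg.2.symm⟩
  · rw [if_neg h2] at hM
    exact absurd hM.symm one_ne_zero

end

end GarsiaAux
/-- **Garsia's criterion.** For a transitive action of a finite group
`G` on a finite set `X` with point stabilizer `K`, the following are equivalent:
(a) every orbit of `G` on `X × X` (diagonal action) is symmetric; (b) every double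
coset `KsK` is closed under inversion; (c) `(G,K)` is a Gelfand pair and every
irreducible subrepresentation of `λ_π` is real. -/
theorem garsia_criterion
    {G X : Type*} [Group G] [Fintype G] [Fintype X] [MulAction G X]
    [MulAction.IsPretransitive G X] (x₀ : X) :
    ((∀ O : Set (X × X), CST.IsDiagOrbit G O → Prod.swap '' O = O) ↔
      ∀ s g : G,
        (∃ a ∈ MulAction.stabilizer G x₀, ∃ b ∈ MulAction.stabilizer G x₀,
          g = a * s * b) →
        (∃ a ∈ MulAction.stabilizer G x₀, ∃ b ∈ MulAction.stabilizer G x₀,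
          g⁻¹ = a * s * b)) ∧
    ((∀ O : Set (X × X), CST.IsDiagOrbit G O → Prod.swap '' O = O) ↔
      CST.MultFree (CST.permRep G X) ∧
        ∀ (U : Submodule ℂ (X → ℂ)) (hU : ∀ (g : G), ∀ f ∈ U, CST.permRep G X g f ∈ U),
          CST.IsIrreducible (CST.subRep (CST.permRep G X) U hU) →
          CST.IsRealRep (CST.subRep (CST.permRep G X) U hU)) := by
  constructor
  · rw [GarsiaAux.orbitSym_iff_hsym]
    exact GarsiaAux.hsym_iff_coset x₀
  · rw [GarsiaAux.orbitSym_iff_hsym]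
    constructor
    · intro hs
      refine ⟨GarsiaAux.multFree_of_hsym hs, ?_⟩
      intro U hU _
      exact GarsiaAux.isRealRep_of_hsym hs hU
    · rintro ⟨hmf, hreal⟩
      exact GarsiaAux.hsym_of_gelfand hmf hreal
end

section
/- Let G be a finite group, n ≥ 1, and for g ∈ G let v(g) = |{h ∈ G : hg = gh}| be the order of the centralizer of g. Then the following three quantities are equal: (a) (1/|G|) Σ_{g∈G} v(g)ⁿ; (b) the number of double cosets of the diagonal subgroup G̃ⁿ⁺¹ = {(g,…,g) : g ∈ G} in Gⁿ⁺¹; (c) the number of orbits of G acting on Gⁿ by simultaneous conjugation γ_n(g)(g₁,…,g_n) = (gg₁g⁻¹,…,gg_ng⁻¹). -/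
open Module

section CPCaux

open MulAction

variable {G : Type*} [Group G] {n : ℕ}

/-- The orbit of simultaneous conjugation is a `ConjAct` orbit. -/
lemma CPC.orbitSet_eq (x : Fin n → G) :
    {y : Fin n → G | ∃ g : G, y = fun i => g * x i * g⁻¹} =
      MulAction.orbit (ConjAct G) x := by
  ext y
  constructor
  · rintro ⟨g, rfl⟩
    exact ⟨ConjAct.toConjAct g, by ext i; simp [ConjAct.smul_def]⟩
  · rintro ⟨g, rfl⟩
    exact ⟨ConjAct.ofConjAct g, by ext i; simp [ConjAct.smul_def]⟩

lemma CPC.ncard_orbitSets (H X : Type*) [Group H] [MulAction H X] :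
    Set.ncard {Ω : Set X | ∃ x : X, Ω = MulAction.orbit H x} =
      Nat.card (MulAction.orbitRel.Quotient H X) := by
  have hset : {Ω : Set X | ∃ x : X, Ω = MulAction.orbit H x} =
      Set.range (fun q : MulAction.orbitRel.Quotient H X => q.orbit) := by
    ext Ω
    constructor
    · rintro ⟨x, rfl⟩
      exact ⟨Quotient.mk'' x, rfl⟩
    · rintro ⟨q, rfl⟩
      induction q using Quotient.inductionOn' with
      | h x => exact ⟨x, rfl⟩
  rw [hset, ← Nat.card_coe_set_eq,
    Nat.card_range_of_injective (MulAction.orbitRel.Quotient.orbit_injective)]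

/-- Burnside step: the fixed points of `toConjAct g` are tuples of centralizing elements. -/
lemma CPC.card_fixedBy [Fintype G] (g : G) :
    Nat.card (MulAction.fixedBy (Fin n → G) (ConjAct.toConjAct g)) =
      Set.ncard {h : G | h * g = g * h} ^ n := by
  have e : MulAction.fixedBy (Fin n → G) (ConjAct.toConjAct g) ≃
      (Fin n → {h : G | h * g = g * h}) := by
    refine ⟨fun x i => ⟨x.1 i, ?_⟩, fun y => ⟨fun i => (y i).1, ?_⟩, fun x => rfl,
      fun y => rfl⟩
    · have hx := congrFun x.2 i
      simp only [Pi.smul_apply, ConjAct.smul_def, ConjAct.ofConjAct_toConjAct] at hx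
      have : g * x.1 i = x.1 i * g := by
        calc g * x.1 i = (g * x.1 i * g⁻¹) * g := by group
        _ = x.1 i * g := by rw [hx]
      exact this.symm
    · funext i
      have hy := (y i).2
      simp only [Set.mem_setOf_eq] at hy
      simp only [Pi.smul_apply, ConjAct.smul_def, ConjAct.ofConjAct_toConjAct]
      calc g * (y i).1 * g⁻¹ = (y i).1 * g * g⁻¹ := by rw [← hy]
      _ = (y i).1 := by group
  classical
  rw [Nat.card_congr e, ← Nat.card_coe_set_eq, Nat.card_fun]
  simp [Nat.card_eq_fintype_card]

/-- The map `F` relating double cosets and conjugation orbits. -/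
def CPC.F (z : Fin (n + 1) → G) : Fin n → G := fun i => z i.succ * (z 0)⁻¹

lemma CPC.F_cons (y : Fin n → G) : CPC.F (Fin.cons 1 y) = y := by
  funext i
  simp [CPC.F]

def CPC.coset (s : Fin (n + 1) → G) : Set (Fin (n + 1) → G) :=
  {x | ∃ a b : G, x = fun i => a * s i * b}

def CPC.orbitSet (x : Fin n → G) : Set (Fin n → G) :=
  {y | ∃ g : G, y = fun i => g * x i * g⁻¹}

lemma CPC.image_coset (s : Fin (n + 1) → G) :
    CPC.F '' CPC.coset s = CPC.orbitSet (CPC.F s) := by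
  ext y
  constructor
  · rintro ⟨x, ⟨a, b, rfl⟩, rfl⟩
    refine ⟨a, ?_⟩
    funext i
    simp only [CPC.F]
    group
  · rintro ⟨g, rfl⟩
    refine ⟨fun i => g * s i * g⁻¹, ⟨g, g⁻¹, rfl⟩, ?_⟩
    funext i
    simp only [CPC.F]
    group

lemma CPC.preimage_orbitSet (x : Fin n → G) :
    CPC.F ⁻¹' CPC.orbitSet x = CPC.coset (Fin.cons 1 x) := by
  ext z
  constructor
  · rintro hz
    obtain ⟨g, hg⟩ := hz
    refine ⟨g, g⁻¹ * z 0, ?_⟩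
    funext i
    induction i using Fin.cases with
    | zero => simp
    | succ j =>
      have h := congrFun hg j
      simp only [CPC.F] at h
      simp only [Fin.cons_succ]
      calc z j.succ = (z j.succ * (z 0)⁻¹) * z 0 := by group
      _ = (g * x j * g⁻¹) * z 0 := by rw [h]
      _ = g * x j * (g⁻¹ * z 0) := by group
  · rintro ⟨a, b, rfl⟩
    refine ⟨a, ?_⟩
    funext i
    simp only [CPC.F, Fin.cons_succ, Fin.cons_zero]
    group

lemma CPC.coset_cons (s : Fin (n + 1) → G) :
    CPC.coset (Fin.cons 1 (CPC.F s)) = CPC.coset s := by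
  have key : ∀ i, (Fin.cons 1 (CPC.F s) : Fin (n + 1) → G) i = s i * (s 0)⁻¹ := by
    intro i
    induction i using Fin.cases with
    | zero => simp
    | succ j => simp [CPC.F]
  ext z
  constructor
  · rintro ⟨a, b, rfl⟩
    refine ⟨a, (s 0)⁻¹ * b, ?_⟩
    funext i
    rw [key i]
    group
  · rintro ⟨a, b, rfl⟩
    refine ⟨a, s 0 * b, ?_⟩
    funext i
    rw [key i]
    group

def CPC.cosetOrbitEquiv (G : Type*) [Group G] (n : ℕ) :
    {D : Set (Fin (n + 1) → G) | ∃ s, D = CPC.coset s} ≃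
      {Ω : Set (Fin n → G) | ∃ x, Ω = CPC.orbitSet x} where
  toFun D := ⟨CPC.F '' D.1, by
    obtain ⟨s, hs⟩ := D.2
    exact ⟨CPC.F s, by rw [hs, CPC.image_coset]⟩⟩
  invFun Ω := ⟨CPC.F ⁻¹' Ω.1, by
    obtain ⟨x, hx⟩ := Ω.2
    exact ⟨Fin.cons 1 x, by rw [hx, CPC.preimage_orbitSet]⟩⟩
  left_inv D := by
    obtain ⟨D, s, rfl⟩ := D
    apply Subtype.ext
    simp only
    rw [CPC.image_coset, CPC.preimage_orbitSet, CPC.coset_cons]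
  right_inv Ω := by
    obtain ⟨Ω, x, rfl⟩ := Ω
    apply Subtype.ext
    simp only
    apply Set.image_preimage_eq
    intro y
    exact ⟨Fin.cons 1 y, CPC.F_cons y⟩

end CPCaux

/-- For a finite group `G` and `n ≥ 1`, the following coincide:
(a) `(1/|G|) Σ_g v(g)ⁿ` where `v(g)` is the order of the centralizer of `g`;
(b) the number of double cosets of the diagonal subgroup in `Gⁿ⁺¹`;
(c) the number of orbits of `G` acting on `Gⁿ` by simultaneous conjugation. -/
theorem centralizer_power_count
    {G : Type*} [Group G] [Fintype G] (n : ℕ) (hn : 1 ≤ n) :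
    ((∑ g : G, (Set.ncard {h : G | h * g = g * h} : ℚ) ^ n) / (Fintype.card G : ℚ) =
      (Set.ncard {D : Set (Fin (n + 1) → G) |
        ∃ s : Fin (n + 1) → G, D = {x | ∃ a b : G, x = fun i => a * s i * b}} : ℚ)) ∧
    (Set.ncard {D : Set (Fin (n + 1) → G) |
        ∃ s : Fin (n + 1) → G, D = {x | ∃ a b : G, x = fun i => a * s i * b}} =
      Set.ncard {Ω : Set (Fin n → G) |
        ∃ x : Fin n → G, Ω = {y | ∃ g : G, y = fun i => g * x i * g⁻¹}}) := by
  classical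
  have hbc : Set.ncard {D : Set (Fin (n + 1) → G) |
        ∃ s : Fin (n + 1) → G, D = {x | ∃ a b : G, x = fun i => a * s i * b}} =
      Set.ncard {Ω : Set (Fin n → G) |
        ∃ x : Fin n → G, Ω = {y | ∃ g : G, y = fun i => g * x i * g⁻¹}} := by
    rw [← Nat.card_coe_set_eq, ← Nat.card_coe_set_eq]
    exact Nat.card_congr (CPC.cosetOrbitEquiv G n)
  refine ⟨?_, hbc⟩
  -- reduce (b) to the number of conjugation orbits
  have horb : Set.ncard {Ω : Set (Fin n → G) |
        ∃ x : Fin n → G, Ω = {y | ∃ g : G, y = fun i => g * x i * g⁻¹}} =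
      Nat.card (MulAction.orbitRel.Quotient (ConjAct G) (Fin n → G)) := by
    have h1 : {Ω : Set (Fin n → G) |
          ∃ x : Fin n → G, Ω = {y | ∃ g : G, y = fun i => g * x i * g⁻¹}} =
        {Ω : Set (Fin n → G) | ∃ x, Ω = MulAction.orbit (ConjAct G) x} := by
      ext Ω
      simp only [Set.mem_setOf_eq]
      constructor
      · rintro ⟨x, rfl⟩; exact ⟨x, (CPC.orbitSet_eq x)⟩
      · rintro ⟨x, rfl⟩; exact ⟨x, (CPC.orbitSet_eq x).symm⟩
    rw [h1, CPC.ncard_orbitSets]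
  -- Burnside's lemma
  haveI : ∀ a : ConjAct G, Fintype (MulAction.fixedBy (Fin n → G) a) :=
    fun a => Fintype.ofFinite _
  haveI : Fintype (Quotient (MulAction.orbitRel (ConjAct G) (Fin n → G))) :=
    Fintype.ofFinite _
  have hb := MulAction.sum_card_fixedBy_eq_card_orbits_mul_card_group
    (ConjAct G) (Fin n → G)
  have key : (∑ g : G, Set.ncard {h : G | h * g = g * h} ^ n) =
      Nat.card (MulAction.orbitRel.Quotient (ConjAct G) (Fin n → G)) * Fintype.card G := by
    have hsum : (∑ g : G, Set.ncard {h : G | h * g = g * h} ^ n) =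
        ∑ a : ConjAct G, Fintype.card (MulAction.fixedBy (Fin n → G) a) := by
      refine Fintype.sum_equiv ConjAct.toConjAct.toEquiv _ _ fun g => ?_
      rw [← Nat.card_eq_fintype_card]
      exact (CPC.card_fixedBy g).symm
    rw [hsum, hb, ConjAct.card]
    congr 1
    exact (Nat.card_eq_fintype_card).symm
  have hcard : (Fintype.card G : ℚ) ≠ 0 := by
    exact_mod_cast Fintype.card_ne_zero
  rw [hbc, horb]
  rw [div_eq_iff hcard]
  have : (∑ g : G, (Set.ncard {h : G | h * g = g * h} : ℚ) ^ n) =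
      ((∑ g : G, Set.ncard {h : G | h * g = g * h} ^ n : ℕ) : ℚ) := by
    push_cast
    rfl
  rw [this, key]
  push_cast
  ring
end

section
/- Let G be a finite group, τ an involutory anti-automorphism of G, and n ≥ 1. For g ∈ G let ζ_τ(g) = |{h ∈ G : τ(h⁻¹)h = g}|. Extend τ coordinatewise to G^m. Then the following three quantities are equal: (a) (1/|G|) Σ_{g∈G} ζ_τ(g)ⁿ⁺¹; (b) the number of τ_{n+1}-invariant double cosets of the diagonal subgroup G̃ⁿ⁺¹ in Gⁿ⁺¹; (c) the number of orbits of G acting on Gⁿ by simultaneous conjugation γ_n that are invariant under the coordinatewise map τ_n. -/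
open Module

namespace TPC

variable {G : Type*} [Group G]

def cnj {m : ℕ} (g : G) (u : Fin m → G) : Fin m → G := fun i => g * u i * g⁻¹

lemma cnj_one {m : ℕ} (u : Fin m → G) : cnj 1 u = u := by funext i; simp [cnj]

lemma cnj_mul {m : ℕ} (g h : G) (u : Fin m → G) : cnj g (cnj h u) = cnj (g * h) u := by
  funext i; simp [cnj, mul_assoc]

def orb {m : ℕ} (u : Fin m → G) : Set (Fin m → G) := {y | ∃ g : G, y = cnj g u}

lemma mem_orb {m : ℕ} {u y : Fin m → G} : y ∈ orb u ↔ ∃ g, y = cnj g u := Iff.rfl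

lemma mem_orb_self {m : ℕ} (u : Fin m → G) : u ∈ orb u := ⟨1, (cnj_one u).symm⟩

lemma orb_eq_of_mem {m : ℕ} {u v : Fin m → G} (h : v ∈ orb u) : orb v = orb u := by
  obtain ⟨g, rfl⟩ := mem_orb.mp h
  ext y
  constructor
  · rintro ⟨h, rfl⟩
    exact ⟨h * g, cnj_mul h g u⟩
  · rintro ⟨h, rfl⟩
    exact mem_orb.mpr ⟨h * g⁻¹, by rw [cnj_mul, inv_mul_cancel_right]⟩

variable (τ : G → G)

lemma tau_one (hm : ∀ a b : G, τ (a * b) = τ b * τ a) : τ 1 = 1 := by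
  have h : τ 1 = τ 1 * τ 1 := by simpa using hm 1 1
  exact left_eq_mul.mp h

lemma tau_inv (hm : ∀ a b : G, τ (a * b) = τ b * τ a) (g : G) : τ g⁻¹ = (τ g)⁻¹ :=
  eq_inv_of_mul_eq_one_left (by rw [← hm, mul_inv_cancel, tau_one τ hm])

def Tm {m : ℕ} (u : Fin m → G) : Fin m → G := fun i => τ (u i)

lemma Tm_cnj (hm : ∀ a b : G, τ (a * b) = τ b * τ a) {m : ℕ} (g : G) (u : Fin m → G) :
    Tm τ (cnj g u) = cnj (τ g)⁻¹ (Tm τ u) := by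
  funext i
  simp only [Tm, cnj]
  rw [hm, hm, tau_inv τ hm]
  group

lemma Tm_orb (hm : ∀ a b : G, τ (a * b) = τ b * τ a) (hi : ∀ g : G, τ (τ g) = g)
    {m : ℕ} (u : Fin m → G) : Tm τ '' orb u = orb (Tm τ u) := by
  ext y
  constructor
  · rintro ⟨z, hz, rfl⟩
    obtain ⟨g, rfl⟩ := mem_orb.mp hz
    exact mem_orb.mpr ⟨(τ g)⁻¹, Tm_cnj τ hm g u⟩
  · rintro ⟨h, rfl⟩
    refine ⟨cnj (τ h⁻¹) u, mem_orb.mpr ⟨τ h⁻¹, rfl⟩, ?_⟩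
    rw [Tm_cnj τ hm, hi, inv_inv]

lemma orb_inv_iff (hm : ∀ a b : G, τ (a * b) = τ b * τ a) (hi : ∀ g : G, τ (τ g) = g)
    {m : ℕ} (u : Fin m → G) : Tm τ '' orb u = orb u ↔ Tm τ u ∈ orb u := by
  constructor
  · intro h
    rw [← h]
    exact ⟨u, mem_orb_self u, rfl⟩
  · intro h
    rw [Tm_orb τ hm hi]
    exact orb_eq_of_mem h

def dmap {m : ℕ} (a b : G) (s : Fin m → G) : Fin m → G := fun i => a * s i * b

def dcs {m : ℕ} (s : Fin m → G) : Set (Fin m → G) := {x | ∃ a b : G, x = dmap a b s}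

lemma mem_dcs {m : ℕ} {s x : Fin m → G} : x ∈ dcs s ↔ ∃ a b : G, x = dmap a b s := Iff.rfl

lemma dmap_dmap {m : ℕ} (a b c d : G) (s : Fin m → G) :
    dmap a b (dmap c d s) = dmap (a * c) (d * b) s := by
  funext i; simp [dmap, mul_assoc]

lemma mem_dcs_self {m : ℕ} (s : Fin m → G) : s ∈ dcs s :=
  ⟨1, 1, by funext i; simp [dmap]⟩

lemma dcs_eq_of_mem {m : ℕ} {s x : Fin m → G} (h : x ∈ dcs s) : dcs x = dcs s := by
  obtain ⟨a, b, rfl⟩ := mem_dcs.mp h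
  ext y
  constructor
  · rintro ⟨c, d, rfl⟩
    exact ⟨c * a, b * d, dmap_dmap c d a b s⟩
  · rintro ⟨c, d, rfl⟩
    refine mem_dcs.mpr ⟨c * a⁻¹, b⁻¹ * d, ?_⟩
    rw [dmap_dmap, inv_mul_cancel_right, mul_inv_cancel_left]

lemma Tm_dmap (hm : ∀ a b : G, τ (a * b) = τ b * τ a) {m : ℕ} (a b : G) (s : Fin m → G) :
    Tm τ (dmap a b s) = dmap (τ b) (τ a) (Tm τ s) := by
  funext i
  simp only [Tm, dmap]
  rw [hm, hm, mul_assoc]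

lemma Tm_dcs (hm : ∀ a b : G, τ (a * b) = τ b * τ a) (hi : ∀ g : G, τ (τ g) = g)
    {m : ℕ} (s : Fin m → G) : Tm τ '' dcs s = dcs (Tm τ s) := by
  ext y
  constructor
  · rintro ⟨x, hx, rfl⟩
    obtain ⟨a, b, rfl⟩ := mem_dcs.mp hx
    exact mem_dcs.mpr ⟨τ b, τ a, Tm_dmap τ hm a b s⟩
  · rintro ⟨a, b, rfl⟩
    refine ⟨dmap (τ b) (τ a) s, mem_dcs.mpr ⟨τ b, τ a, rfl⟩, ?_⟩
    rw [Tm_dmap τ hm, hi, hi]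

lemma dcs_inv_iff (hm : ∀ a b : G, τ (a * b) = τ b * τ a) (hi : ∀ g : G, τ (τ g) = g)
    {m : ℕ} (s : Fin m → G) : Tm τ '' dcs s = dcs s ↔ Tm τ s ∈ dcs s := by
  constructor
  · intro h
    rw [← h]
    exact ⟨s, mem_dcs_self s, rfl⟩
  · intro h
    rw [Tm_dcs τ hm hi]
    exact dcs_eq_of_mem h

/-- the projection `x ↦ (x 0⁻¹ * x (i+1))_i`. -/
def pr {n : ℕ} (x : Fin (n + 1) → G) : Fin n → G := fun i => (x 0)⁻¹ * x i.succ

lemma pr_image {n : ℕ} (s : Fin (n + 1) → G) : pr '' dcs s = orb (pr s) := by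
  ext y
  constructor
  · rintro ⟨x, hx, rfl⟩
    obtain ⟨a, b, rfl⟩ := mem_dcs.mp hx
    refine mem_orb.mpr ⟨b⁻¹, ?_⟩
    funext i
    simp only [pr, dmap, cnj]
    group
  · rintro (h : ∃ g, y = cnj g (pr s))
    obtain ⟨g, rfl⟩ := h
    refine ⟨dmap 1 g⁻¹ s, mem_dcs.mpr ⟨1, g⁻¹, rfl⟩, ?_⟩
    funext i
    simp only [pr, dmap, cnj]
    group

lemma dcs_eq_iff_orb {n : ℕ} (s s' : Fin (n + 1) → G) :
    dcs s = dcs s' ↔ orb (pr s) = orb (pr s') := by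
  constructor
  · intro h
    rw [← pr_image, ← pr_image, h]
  · intro h
    have hmem : pr s' ∈ orb (pr s) := by rw [h]; exact mem_orb_self _
    obtain ⟨g, hg⟩ := mem_orb.mp hmem
    have hs' : s' ∈ dcs s := by
      refine mem_dcs.mpr ⟨s' 0 * g * (s 0)⁻¹, g⁻¹, ?_⟩
      funext i
      induction i using Fin.cases with
      | zero => simp [dmap]
      | succ j =>
        have hj := congrFun hg j
        simp only [pr, cnj] at hj
        have : s' j.succ = s' 0 * ((s' 0)⁻¹ * s' j.succ) := by group
        rw [this, hj]
        simp [dmap, mul_assoc]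
    exact (dcs_eq_of_mem hs').symm

lemma pr_Tm (hm : ∀ a b : G, τ (a * b) = τ b * τ a) {n : ℕ} (s : Fin (n + 1) → G) :
    orb (pr (Tm τ s)) = orb (Tm τ (pr s)) := by
  refine orb_eq_of_mem (mem_orb.mpr ⟨(τ (s 0))⁻¹, ?_⟩)
  funext i
  simp only [pr, cnj, Tm]
  rw [hm, tau_inv τ hm]
  group

lemma transfer (hm : ∀ a b : G, τ (a * b) = τ b * τ a) (hi : ∀ g : G, τ (τ g) = g)
    {n : ℕ} (s : Fin (n + 1) → G) :
    (Tm τ '' dcs s = dcs s) ↔ (Tm τ '' orb (pr s) = orb (pr s)) := by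
  rw [dcs_inv_iff τ hm hi, orb_inv_iff τ hm hi]
  constructor
  · intro h
    have : dcs (Tm τ s) = dcs s := dcs_eq_of_mem h
    have h2 : orb (pr (Tm τ s)) = orb (pr s) := (dcs_eq_iff_orb _ _).mp this
    rw [pr_Tm τ hm] at h2
    rw [← h2]
    exact mem_orb_self _
  · intro h
    have h2 : orb (Tm τ (pr s)) = orb (pr s) := orb_eq_of_mem h
    rw [← pr_Tm τ hm] at h2
    have : dcs (Tm τ s) = dcs s := (dcs_eq_iff_orb _ _).mpr h2
    rw [← this]
    exact mem_dcs_self _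

section Counting

variable [Fintype G]

lemma fiber_card {m : ℕ} (u y : Fin m → G) [Decidable (y ∈ orb u)] :
    Nat.card {g : G // cnj g u = y} =
      if y ∈ orb u then Nat.card {g : G // cnj g u = u} else 0 := by
  split_ifs with h
  · obtain ⟨g₀, rfl⟩ := mem_orb.mp h
    refine Nat.card_congr
      ⟨fun p => ⟨g₀⁻¹ * p.1, by rw [← cnj_mul, p.2, cnj_mul, inv_mul_cancel, cnj_one]⟩,
       fun p => ⟨g₀ * p.1, by rw [← cnj_mul, p.2]⟩, fun p => ?_, fun p => ?_⟩ <;>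
      · apply Subtype.ext
        simp
  · have : IsEmpty {g : G // cnj g u = y} := ⟨fun p => h (mem_orb.mpr ⟨p.1, p.2.symm⟩)⟩
    exact Nat.card_of_isEmpty

lemma ncard_eq_filter_card {β : Type*} [Fintype β] (s : Set β) [DecidablePred (· ∈ s)] :
    s.ncard = (Finset.univ.filter (· ∈ s)).card := by
  rw [← Nat.card_coe_set_eq, Nat.card_eq_fintype_card]
  exact Fintype.card_subtype _

lemma orb_stab {m : ℕ} (u : Fin m → G) :
    (orb u).ncard * Nat.card {g : G // cnj g u = u} = Fintype.card G := by
  classical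
  have h1 : (Fintype.card G) = ∑ y : Fin m → G, Nat.card {g : G // cnj g u = y} := by
    rw [← Nat.card_eq_fintype_card,
      ← Nat.card_congr (Equiv.sigmaFiberEquiv (fun g : G => cnj g u)),
      Nat.card_eq_fintype_card, Fintype.card_sigma]
    simp [Nat.card_eq_fintype_card]
  have h2 : ∑ y : Fin m → G, Nat.card {g : G // cnj g u = y} =
      ∑ y : Fin m → G, if y ∈ orb u then Nat.card {g : G // cnj g u = u} else 0 :=
    Finset.sum_congr rfl fun y _ => fiber_card u y
  rw [h1, h2, ← Finset.sum_filter, Finset.sum_const, smul_eq_mul,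
    ncard_eq_filter_card (orb u)]

lemma count_main (hm : ∀ a b : G, τ (a * b) = τ b * τ a) (hi : ∀ g : G, τ (τ g) = g)
    (m : ℕ) :
    ((Nat.card {p : G × (Fin m → G) // ∀ i, τ (p.2 i) = p.1 * p.2 i * p.1⁻¹}) : ℚ) =
      (Fintype.card G : ℚ) *
        (Set.ncard {Ω : Set (Fin m → G) | (∃ x, Ω = orb x) ∧ Tm τ '' Ω = Ω} : ℚ) := by
  classical
  have e : {p : G × (Fin m → G) // ∀ i, τ (p.2 i) = p.1 * p.2 i * p.1⁻¹} ≃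
      Σ u : Fin m → G, {g : G // cnj g u = Tm τ u} :=
    { toFun := fun p => ⟨p.1.2, p.1.1, funext fun i => (p.2 i).symm⟩
      invFun := fun q => ⟨(q.2.1, q.1), fun i => (congrFun q.2.2 i).symm⟩
      left_inv := fun p => rfl
      right_inv := fun q => rfl }
  have h1 : Nat.card {p : G × (Fin m → G) // ∀ i, τ (p.2 i) = p.1 * p.2 i * p.1⁻¹} =
      ∑ u : Fin m → G, Nat.card {g : G // cnj g u = Tm τ u} := by
    rw [Nat.card_congr e, Nat.card_eq_fintype_card, Fintype.card_sigma]
    simp [Nat.card_eq_fintype_card]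
  have h2 : ∀ u : Fin m → G, Nat.card {g : G // cnj g u = Tm τ u} =
      if Tm τ u ∈ orb u then Nat.card {g : G // cnj g u = u} else 0 := fun u =>
    fiber_card u (Tm τ u)
  rw [h1]
  simp_rw [h2]
  push_cast
  rw [← Finset.sum_filter]
  -- each stabilizer card equals |G| / |orbit|
  have horb0 : ∀ u : Fin m → G, ((orb u).ncard : ℚ) ≠ 0 := by
    intro u
    have : 0 < (orb u).ncard := (Set.ncard_pos (Set.toFinite _)).mpr ⟨u, mem_orb_self u⟩
    positivity
  have hstab : ∀ u : Fin m → G,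
      ((Nat.card {g : G // cnj g u = u} : ℚ)) = (Fintype.card G : ℚ) / ((orb u).ncard : ℚ) := by
    intro u
    rw [eq_div_iff (horb0 u), mul_comm]
    exact_mod_cast congrArg (Nat.cast : ℕ → ℚ) (orb_stab u)
  rw [Finset.sum_congr rfl fun u _ => hstab u]
  have key : ∑ u ∈ Finset.univ.filter (fun u : Fin m → G => Tm τ u ∈ orb u),
        (Fintype.card G : ℚ) / ((orb u).ncard : ℚ) =
      ∑ Ω ∈ (Finset.univ.filter (fun u : Fin m → G => Tm τ u ∈ orb u)).image
          (fun u => orb u), (Fintype.card G : ℚ) := by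
    refine (Finset.sum_image' (fun u => (Fintype.card G : ℚ) / ((orb u).ncard : ℚ)) ?_).symm
    intro c hc
    have hc' : Tm τ c ∈ orb c := (Finset.mem_filter.mp hc).2
    have hfib : (Finset.univ.filter (fun u : Fin m → G => Tm τ u ∈ orb u)).filter
        (fun j => orb j = orb c) = Finset.univ.filter (· ∈ orb c) := by
      ext j
      simp only [Finset.mem_filter, Finset.mem_univ, true_and]
      constructor
      · rintro ⟨_, hjc⟩
        rw [← hjc]
        exact mem_orb_self j
      · intro hj
        have hoc : orb j = orb c := orb_eq_of_mem hj
        refine ⟨?_, hoc⟩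
        have h3 : Tm τ '' orb c = orb c := (orb_inv_iff τ hm hi c).mpr hc'
        have h4 : Tm τ j ∈ orb c := by
          rw [← h3]
          exact ⟨j, by rw [← hoc]; exact mem_orb_self j, rfl⟩
        rwa [hoc]
    rw [hfib]
    have hcongr : ∑ j ∈ Finset.univ.filter (· ∈ orb c),
          (Fintype.card G : ℚ) / ((orb j).ncard : ℚ)
        = ∑ _j ∈ Finset.univ.filter (· ∈ orb c),
          (Fintype.card G : ℚ) / ((orb c).ncard : ℚ) :=
      Finset.sum_congr rfl fun j hj => by
        rw [orb_eq_of_mem (Finset.mem_filter.mp hj).2]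
    rw [hcongr, Finset.sum_const, ← ncard_eq_filter_card (orb c), nsmul_eq_mul, mul_comm,
      div_mul_cancel₀ _ (horb0 c)]
  rw [key, Finset.sum_const, nsmul_eq_mul]
  have himg : (((Finset.univ.filter (fun u : Fin m → G => Tm τ u ∈ orb u)).image
        (fun u => orb u) : Finset (Set (Fin m → G))) : Set (Set (Fin m → G)))
      = {Ω : Set (Fin m → G) | (∃ x, Ω = orb x) ∧ Tm τ '' Ω = Ω} := by
    ext Ω
    simp only [Finset.coe_image, Set.mem_image, Finset.mem_coe, Finset.mem_filter,
      Finset.mem_univ, true_and, Set.mem_setOf_eq]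
    constructor
    · rintro ⟨u, hu, rfl⟩
      exact ⟨⟨u, rfl⟩, (orb_inv_iff τ hm hi u).mpr hu⟩
    · rintro ⟨⟨x, rfl⟩, hinvar⟩
      exact ⟨x, (orb_inv_iff τ hm hi x).mp hinvar, rfl⟩
  rw [← Set.ncard_coe_finset, himg, mul_comm]

lemma zeta_sum (hm : ∀ a b : G, τ (a * b) = τ b * τ a) (hi : ∀ g : G, τ (τ g) = g)
    (n : ℕ) :
    ∑ g : G, (Set.ncard {h : G | τ h⁻¹ * h = g} : ℚ) ^ (n + 1) =
      (Nat.card {p : G × (Fin n → G) // ∀ i, τ (p.2 i) = p.1 * p.2 i * p.1⁻¹} : ℚ) := by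
  classical
  have step2 : ∀ g : G, (Set.ncard {h : G | τ h⁻¹ * h = g}) ^ (n + 1) =
      Nat.card {h : Fin (n + 1) → G // ∀ i, τ (h i)⁻¹ * h i = g} := by
    intro g
    have hn : (Set.ncard {h : G | τ h⁻¹ * h = g}) = Nat.card {x : G // τ x⁻¹ * x = g} :=
      (Nat.card_coe_set_eq _).symm
    have e1 : {h : Fin (n + 1) → G // ∀ i, τ (h i)⁻¹ * h i = g} ≃
        (Fin (n + 1) → {x : G // τ x⁻¹ * x = g}) :=
      { toFun := fun p i => ⟨p.1 i, p.2 i⟩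
        invFun := fun f => ⟨fun i => (f i).1, fun i => (f i).2⟩
        left_inv := fun p => rfl
        right_inv := fun f => rfl }
    rw [hn, Nat.card_congr e1, Nat.card_fun, Nat.card_eq_fintype_card (α := Fin (n + 1)),
      Fintype.card_fin]
  have step3 : ∑ g : G, Nat.card {h : Fin (n + 1) → G // ∀ i, τ (h i)⁻¹ * h i = g} =
      Nat.card {h : Fin (n + 1) → G // ∀ i, τ (h i)⁻¹ * h i = τ (h 0)⁻¹ * h 0} := by
    have e2 : (Σ g : G, {h : Fin (n + 1) → G // ∀ i, τ (h i)⁻¹ * h i = g}) ≃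
        {h : Fin (n + 1) → G // ∀ i, τ (h i)⁻¹ * h i = τ (h 0)⁻¹ * h 0} :=
      { toFun := fun p => ⟨p.2.1, fun i => (p.2.2 i).trans (p.2.2 0).symm⟩
        invFun := fun p => ⟨τ (p.1 0)⁻¹ * p.1 0, p.1, p.2⟩
        left_inv := fun p => by
          rcases p with ⟨g, h, hh⟩
          have h0 := hh 0
          subst h0
          rfl
        right_inv := fun p => rfl }
    calc ∑ g : G, Nat.card {h : Fin (n + 1) → G // ∀ i, τ (h i)⁻¹ * h i = g}
        = Nat.card (Σ g : G, {h : Fin (n + 1) → G // ∀ i, τ (h i)⁻¹ * h i = g}) := by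
          rw [Nat.card_eq_fintype_card, Fintype.card_sigma]
          simp [Nat.card_eq_fintype_card]
      _ = _ := Nat.card_congr e2
  have key1 : ∀ h : Fin (n + 1) → G, (∀ i, τ (h i)⁻¹ * h i = τ (h 0)⁻¹ * h 0) →
      ∀ i : Fin n, τ ((h 0)⁻¹ * h i.succ) = h 0 * ((h 0)⁻¹ * h i.succ) * (h 0)⁻¹ := by
    intro h hh i
    have h1 : (τ (h i.succ))⁻¹ * h i.succ = (τ (h 0))⁻¹ * h 0 := by
      have := hh i.succ
      rwa [tau_inv τ hm, tau_inv τ hm] at this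
    rw [inv_mul_eq_iff_eq_mul] at h1
    rw [hm, tau_inv τ hm]
    conv_rhs => rw [h1]
    group
  have key2 : ∀ (g : G) (u : Fin n → G), (∀ i, τ (u i) = g * u i * g⁻¹) →
      ∀ i : Fin (n + 1), τ ((Fin.cons g (fun j => g * u j) : Fin (n + 1) → G) i)⁻¹ *
        (Fin.cons g (fun j => g * u j) : Fin (n + 1) → G) i = τ g⁻¹ * g := by
    intro g u hu i
    induction i using Fin.cases with
    | zero => simp
    | succ j =>
      simp only [Fin.cons_succ]
      rw [tau_inv τ hm, tau_inv τ hm, hm, hu j]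
      group
  have e3 : {h : Fin (n + 1) → G // ∀ i, τ (h i)⁻¹ * h i = τ (h 0)⁻¹ * h 0} ≃
      {p : G × (Fin n → G) // ∀ i, τ (p.2 i) = p.1 * p.2 i * p.1⁻¹} :=
    { toFun := fun p => ⟨(p.1 0, fun i => (p.1 0)⁻¹ * p.1 i.succ), key1 p.1 p.2⟩
      invFun := fun p => ⟨Fin.cons p.1.1 (fun j => p.1.1 * p.1.2 j), by
        intro i
        exact (key2 p.1.1 p.1.2 p.2 i).trans (key2 p.1.1 p.1.2 p.2 0).symm⟩
      left_inv := fun p => by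
        apply Subtype.ext
        funext i
        induction i using Fin.cases with
        | zero => simp
        | succ j => simp
      right_inv := fun p => by
        apply Subtype.ext
        refine Prod.ext ?_ ?_
        · simp
        · funext i
          simp }
  have hterm : ∀ g : G, ((Set.ncard {h : G | τ h⁻¹ * h = g} : ℚ)) ^ (n + 1) =
      ((Nat.card {h : Fin (n + 1) → G // ∀ i, τ (h i)⁻¹ * h i = g} : ℚ)) := by
    intro g
    exact_mod_cast congrArg (Nat.cast : ℕ → ℚ) (step2 g)
  rw [Finset.sum_congr rfl fun g _ => hterm g, ← Nat.cast_sum, step3, Nat.card_congr e3]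

end Counting

end TPC

/-- For a finite group `G` with involutory anti-automorphism `τ` and
`n ≥ 1`, the following coincide: (a) `(1/|G|) Σ_g ζ_τ(g)ⁿ⁺¹` where
`ζ_τ(g) = |{h : τ(h⁻¹)h = g}|`; (b) the number of `τ_{n+1}`-invariant double cosets of
the diagonal subgroup in `Gⁿ⁺¹`; (c) the number of `τ_n`-invariant orbits of `G` acting
on `Gⁿ` by simultaneous conjugation. -/
theorem twisted_power_count
    {G : Type*} [Group G] [Fintype G]
    (τ : G → G) (hmul : ∀ a b : G, τ (a * b) = τ b * τ a)
    (hinv : ∀ g : G, τ (τ g) = g) (n : ℕ) (hn : 1 ≤ n) :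
    ((∑ g : G, (Set.ncard {h : G | τ h⁻¹ * h = g} : ℚ) ^ (n + 1)) /
        (Fintype.card G : ℚ) =
      (Set.ncard {D : Set (Fin (n + 1) → G) |
        (∃ s : Fin (n + 1) → G, D = {x | ∃ a b : G, x = fun i => a * s i * b}) ∧
          (fun x : Fin (n + 1) → G => fun i => τ (x i)) '' D = D} : ℚ)) ∧
    (Set.ncard {D : Set (Fin (n + 1) → G) |
        (∃ s : Fin (n + 1) → G, D = {x | ∃ a b : G, x = fun i => a * s i * b}) ∧
          (fun x : Fin (n + 1) → G => fun i => τ (x i)) '' D = D} =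
      Set.ncard {Ω : Set (Fin n → G) |
        (∃ x : Fin n → G, Ω = {y | ∃ g : G, y = fun i => g * x i * g⁻¹}) ∧
          (fun y : Fin n → G => fun i => τ (y i)) '' Ω = Ω}) := by
  classical
  show ((∑ g : G, (Set.ncard {h : G | τ h⁻¹ * h = g} : ℚ) ^ (n + 1)) /
        (Fintype.card G : ℚ) =
      (Set.ncard {D : Set (Fin (n + 1) → G) |
        (∃ s : Fin (n + 1) → G, D = TPC.dcs s) ∧ TPC.Tm τ '' D = D} : ℚ)) ∧
    (Set.ncard {D : Set (Fin (n + 1) → G) |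
        (∃ s : Fin (n + 1) → G, D = TPC.dcs s) ∧ TPC.Tm τ '' D = D} =
      Set.ncard {Ω : Set (Fin n → G) |
        (∃ x : Fin n → G, Ω = TPC.orb x) ∧ TPC.Tm τ '' Ω = Ω})
  have hG0 : (Fintype.card G : ℚ) ≠ 0 := Nat.cast_ne_zero.mpr Fintype.card_pos.ne'
  have key2 : Set.ncard {D : Set (Fin (n + 1) → G) |
        (∃ s : Fin (n + 1) → G, D = TPC.dcs s) ∧ TPC.Tm τ '' D = D} =
      Set.ncard {Ω : Set (Fin n → G) |
        (∃ x : Fin n → G, Ω = TPC.orb x) ∧ TPC.Tm τ '' Ω = Ω} := by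
    have himg : (Set.image TPC.pr) ''
          {D : Set (Fin (n + 1) → G) | (∃ s : Fin (n + 1) → G, D = TPC.dcs s) ∧
            TPC.Tm τ '' D = D}
        = {Ω : Set (Fin n → G) | (∃ x : Fin n → G, Ω = TPC.orb x) ∧
            TPC.Tm τ '' Ω = Ω} := by
      ext Ω
      constructor
      · rintro ⟨D, ⟨⟨s, rfl⟩, hD⟩, rfl⟩
        rw [TPC.pr_image s]
        exact ⟨⟨TPC.pr s, rfl⟩, (TPC.transfer τ hmul hinv s).mp hD⟩
      · rintro ⟨⟨x, rfl⟩, hΩ⟩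
        have hpr : TPC.pr (Fin.cons 1 x : Fin (n + 1) → G) = x := by
          funext i
          simp [TPC.pr]
        refine ⟨TPC.dcs (Fin.cons 1 x : Fin (n + 1) → G), ⟨⟨Fin.cons 1 x, rfl⟩, ?_⟩, ?_⟩
        · rw [TPC.transfer τ hmul hinv, hpr]
          exact hΩ
        · rw [TPC.pr_image, hpr]
    have hinj : Set.InjOn (Set.image TPC.pr)
        {D : Set (Fin (n + 1) → G) | (∃ s : Fin (n + 1) → G, D = TPC.dcs s) ∧
          TPC.Tm τ '' D = D} := by
      rintro D ⟨⟨s, rfl⟩, -⟩ D' ⟨⟨s', rfl⟩, -⟩ hDD'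
      rw [TPC.pr_image, TPC.pr_image] at hDD'
      exact (TPC.dcs_eq_iff_orb s s').mpr hDD'
    rw [← himg]
    exact (Set.ncard_image_of_injOn hinj).symm
  refine ⟨?_, key2⟩
  rw [key2, div_eq_iff hG0, TPC.zeta_sum τ hmul hinv n, TPC.count_main τ hmul hinv n,
    mul_comm]
end

section
/- Let G be a finite group, τ an involutory anti-automorphism of G, and n ≥ 1. Then Σ_{g∈G} ζ_τ(g)ⁿ⁺¹ ≤ Σ_{g∈G} v(g)ⁿ, with equality if and only if every double coset of the diagonal subgroup G̃ⁿ⁺¹ in Gⁿ⁺¹ is invariant under the coordinatewise extension τ_{n+1} of τ (equivalently, if and only if every orbit of G acting on Gⁿ by simultaneous conjugation is invariant under the coordinatewise map τ_n). -/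
open Module

section ZetaAuxAll
set_option linter.unusedSectionVars false

lemma zcp_sum_card_fiber {α β : Type*} [Fintype α] [Finite β] (P : α → β → Prop) :
    ∑ a : α, Nat.card {b // P a b} = Nat.card {p : α × β // P p.1 p.2} := by
  classical
  cases nonempty_fintype β
  rw [Nat.card_congr (Equiv.subtypeProdEquivSigmaSubtype P), Nat.card_eq_fintype_card,
    Fintype.card_sigma]
  exact Finset.sum_congr rfl fun a _ => Nat.card_eq_fintype_card

lemma zcp_ncard_pow {α : Type*} [Finite α] (Q : α → Prop) (m : ℕ) :
    Set.ncard {h | Q h} ^ m = Nat.card {x : Fin m → α // ∀ i, Q (x i)} := by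
  rw [← Nat.card_coe_set_eq,
    Nat.card_congr (Equiv.subtypePiEquivPi (p := fun _ : Fin m => Q)), Nat.card_fun]
  simp [-Nat.card_coe_set_eq]
  rfl

/-- `g` is determined in the fiber description. -/
def zcp_equivDet {β γ : Type*} (m : ℕ) (F : γ → β) :
    {p : β × (Fin (m + 1) → γ) // ∀ i, F (p.2 i) = p.1} ≃
      {x : Fin (m + 1) → γ // ∀ i, F (x i) = F (x 0)} where
  toFun p := ⟨p.1.2, fun i => (p.2 i).trans (p.2 0).symm⟩
  invFun x := ⟨(F (x.1 0), x.1), fun i => x.2 i⟩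
  left_inv := by
    rintro ⟨⟨g, x⟩, h⟩
    apply Subtype.ext
    show (F (x 0), x) = (g, x)
    rw [h 0]
  right_inv x := rfl

section Grp
variable {G : Type*} [Group G]

lemma zcp_tau_one (τ : G → G) (hmul : ∀ a b : G, τ (a * b) = τ b * τ a) : τ 1 = 1 := by
  have h0 : τ 1 = τ 1 * τ 1 := by simpa using hmul 1 1
  have h2 : τ 1 * 1 = τ 1 * τ 1 := by rw [mul_one]; exact h0
  exact (mul_left_cancel h2).symm

lemma zcp_tau_inv (τ : G → G) (hmul : ∀ a b : G, τ (a * b) = τ b * τ a) (g : G) :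
    τ g⁻¹ = (τ g)⁻¹ := by
  have h : τ g * τ g⁻¹ = 1 := by
    rw [← hmul, inv_mul_cancel, zcp_tau_one τ hmul]
  exact (inv_eq_of_mul_eq_one_right h).symm

/-- The key bijection. -/
def zcp_keyEquiv (τ : G → G) (hmul : ∀ a b : G, τ (a * b) = τ b * τ a)
    (hinv : ∀ g : G, τ (τ g) = g) (n : ℕ) :
    {x : Fin (n + 1) → G // ∀ i, τ (x i)⁻¹ * x i = τ (x 0)⁻¹ * x 0} ≃
      {p : G × (Fin n → G) // ∀ i, p.2 i = p.1 * τ (p.2 i) * p.1⁻¹} where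
  toFun x := ⟨(τ (x.1 0), fun i => x.1 i.succ * (x.1 0)⁻¹), by
    intro i
    show x.1 i.succ * (x.1 0)⁻¹ =
      τ (x.1 0) * τ (x.1 i.succ * (x.1 0)⁻¹) * (τ (x.1 0))⁻¹
    have h := x.2 i.succ
    rw [zcp_tau_inv τ hmul, zcp_tau_inv τ hmul] at h
    have hu : x.1 i.succ = τ (x.1 i.succ) * ((τ (x.1 0))⁻¹ * x.1 0) := by
      rw [← h]; group
    rw [hmul, zcp_tau_inv τ hmul]
    nth_rewrite 1 [hu]
    group⟩
  invFun p := ⟨Fin.cons (τ p.1.1) (fun i => p.1.2 i * τ p.1.1), by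
    intro i
    induction i using Fin.cases with
    | zero => rfl
    | succ j =>
    simp only [Fin.cons_succ, Fin.cons_zero]
    have hy : τ (p.1.2 j) = p.1.1⁻¹ * (p.1.2 j * p.1.1) := by
      nth_rewrite 2 [p.2 j]; group
    rw [zcp_tau_inv τ hmul, zcp_tau_inv τ hmul, hmul, hinv, hy]
    group⟩
  left_inv := by
    rintro ⟨x, hx⟩
    apply Subtype.ext
    funext i
    refine Fin.cases ?_ (fun j => ?_) i
    · show τ (τ (x 0)) = x 0
      rw [hinv]
    · show x j.succ * (x 0)⁻¹ * τ (τ (x 0)) = x j.succ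
      rw [hinv]; group
  right_inv := by
    rintro ⟨⟨c, y⟩, hp⟩
    apply Subtype.ext
    simp [Fin.cons_zero, Fin.cons_succ, hinv, Prod.mk.injEq, mul_inv_cancel_right]

lemma zcp_C_iff_orbit (τ : G → G) (hmul : ∀ a b : G, τ (a * b) = τ b * τ a)
    (hinv : ∀ g : G, τ (τ g) = g) (n : ℕ) :
    (∀ x : Fin n → G, ∃ c : G, ∀ i, x i = c * τ (x i) * c⁻¹) ↔
      ∀ x : Fin n → G,
        (fun y : Fin n → G => fun i => τ (y i)) ''
            {y | ∃ g : G, y = fun i => g * x i * g⁻¹} =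
          {y | ∃ g : G, y = fun i => g * x i * g⁻¹} := by
  constructor
  · intro hC x
    obtain ⟨c, hc⟩ := hC x
    have hti : ∀ i, τ (x i) = c⁻¹ * (x i * c) := by
      intro i
      nth_rewrite 2 [hc i]
      group
    ext z
    constructor
    · rintro ⟨y, ⟨g, rfl⟩, rfl⟩
      refine ⟨(τ g)⁻¹ * c⁻¹, ?_⟩
      funext i
      show τ (g * x i * g⁻¹) = ((τ g)⁻¹ * c⁻¹) * x i * ((τ g)⁻¹ * c⁻¹)⁻¹
      rw [mul_assoc, hmul, hmul, zcp_tau_inv τ hmul, hti i]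
      group
    · rintro ⟨g, rfl⟩
      refine ⟨fun i => τ (g * x i * g⁻¹), ⟨(τ g)⁻¹ * c⁻¹, ?_⟩, ?_⟩
      · funext i
        show τ (g * x i * g⁻¹) = ((τ g)⁻¹ * c⁻¹) * x i * ((τ g)⁻¹ * c⁻¹)⁻¹
        rw [mul_assoc, hmul, hmul, zcp_tau_inv τ hmul, hti i]
        group
      · funext i
        show τ (τ (g * x i * g⁻¹)) = g * x i * g⁻¹
        rw [hinv]
  · intro hO x
    have hx : x ∈ {y : Fin n → G | ∃ g : G, y = fun i => g * x i * g⁻¹} := by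
      refine ⟨1, ?_⟩
      funext i
      simp
    have : (fun i => τ (x i)) ∈ {y : Fin n → G | ∃ g : G, y = fun i => g * x i * g⁻¹} := by
      rw [← hO x]
      exact ⟨x, hx, rfl⟩
    obtain ⟨g, hg⟩ := this
    refine ⟨g⁻¹, fun i => ?_⟩
    have hgi : τ (x i) = g * x i * g⁻¹ := congrFun hg i
    rw [hgi]
    group

lemma zcp_C_iff_coset (τ : G → G) (hmul : ∀ a b : G, τ (a * b) = τ b * τ a)
    (hinv : ∀ g : G, τ (τ g) = g) (n : ℕ) :
    (∀ x : Fin n → G, ∃ c : G, ∀ i, x i = c * τ (x i) * c⁻¹) ↔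
      ∀ s : Fin (n + 1) → G,
        (fun x : Fin (n + 1) → G => fun i => τ (x i)) ''
            {x | ∃ a b : G, x = fun i => a * s i * b} =
          {x | ∃ a b : G, x = fun i => a * s i * b} := by
  constructor
  · intro hC s
    -- first produce a, b with τ (s i) = a * s i * b
    obtain ⟨c, hc⟩ := hC (fun j : Fin n => s j.succ * (s 0)⁻¹)
    have hty : ∀ j : Fin n, τ (s j.succ * (s 0)⁻¹) =
        c⁻¹ * (s j.succ * (s 0)⁻¹ * c) := by
      intro j
      nth_rewrite 2 [hc j]
      group
    have hex : ∃ a b : G, ∀ i : Fin (n + 1), τ (s i) = a * s i * b := by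
      refine ⟨τ (s 0) * c⁻¹, (s 0)⁻¹ * (c * (τ (s 0))⁻¹ * τ (s 0)), fun i => ?_⟩
      induction i using Fin.cases with
      | zero => group
      | succ j =>
        have e1 := hmul (s j.succ * (s 0)⁻¹) (s 0)
        rw [inv_mul_cancel_right] at e1
        rw [e1, hty j]
        group
    obtain ⟨a, b, hab⟩ := hex
    ext z
    constructor
    · rintro ⟨w, ⟨u, v, rfl⟩, rfl⟩
      refine ⟨τ v * a, b * τ u, ?_⟩
      funext i
      show τ (u * s i * v) = (τ v * a) * s i * (b * τ u)
      rw [mul_assoc, hmul, hmul, hab i]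
      group
    · rintro ⟨u, v, rfl⟩
      refine ⟨fun i => τ (u * s i * v), ⟨τ v * a, b * τ u, ?_⟩, ?_⟩
      · funext i
        show τ (u * s i * v) = (τ v * a) * s i * (b * τ u)
        rw [mul_assoc, hmul, hmul, hab i]
        group
      · funext i
        show τ (τ (u * s i * v)) = u * s i * v
        rw [hinv]
  · intro hD x
    set s : Fin (n + 1) → G := Fin.cons 1 x with hs
    have hsmem : s ∈ {z : Fin (n + 1) → G | ∃ a b : G, z = fun i => a * s i * b} := by
      refine ⟨1, 1, ?_⟩
      funext i
      simp
    have : (fun i => τ (s i)) ∈ {z : Fin (n + 1) → G | ∃ a b : G, z = fun i => a * s i * b} := by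
      rw [← hD s]
      exact ⟨s, hsmem, rfl⟩
    obtain ⟨a, b, hab⟩ := this
    have h0 : τ (s 0) = a * s 0 * b := congrFun hab 0
    rw [hs] at h0
    simp only [Fin.cons_zero, zcp_tau_one τ hmul, mul_one] at h0
    have hb : b = a⁻¹ := by
      rw [eq_comm, ← eq_inv_mul_iff_mul_eq] at h0
      rw [h0]; group
    refine ⟨a⁻¹, fun j => ?_⟩
    have hj : τ (s j.succ) = a * s j.succ * b := congrFun hab j.succ
    rw [hs] at hj
    simp only [Fin.cons_succ] at hj
    rw [hj, hb]
    group

variable [Fintype G]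

lemma zcp_fiber_eq (τ : G → G) {n : ℕ} (x : Fin n → G) (c₀ : G)
    (h₀ : ∀ i, x i = c₀ * τ (x i) * c₀⁻¹) :
    Nat.card {c : G // ∀ i, x i = c * τ (x i) * c⁻¹} =
      Nat.card {c : G // ∀ i, x i * c = c * x i} := by
  have hti : ∀ i, τ (x i) = c₀⁻¹ * (x i * c₀) := by
    intro i
    nth_rewrite 2 [h₀ i]
    group
  apply Nat.card_congr
  refine ⟨fun c => ⟨c.1 * c₀⁻¹, ?_⟩, fun d => ⟨d.1 * c₀, ?_⟩, ?_, ?_⟩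
  · intro i
    have hc := c.2 i
    rw [hti i] at hc
    nth_rewrite 1 [hc]
    group
  · intro i
    have hd := d.2 i
    have hxd : x i = d.1 * x i * d.1⁻¹ := by rw [← hd]; group
    rw [hti i]
    nth_rewrite 1 [hxd]
    group
  · intro c
    apply Subtype.ext
    show c.1 * c₀⁻¹ * c₀ = c.1
    group
  · intro d
    apply Subtype.ext
    show d.1 * c₀ * c₀⁻¹ = d.1
    group

lemma zcp_fiber_le (τ : G → G) {n : ℕ} (x : Fin n → G) :
    Nat.card {c : G // ∀ i, x i = c * τ (x i) * c⁻¹} ≤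
      Nat.card {c : G // ∀ i, x i * c = c * x i} := by
  by_cases h : ∃ c₀ : G, ∀ i, x i = c₀ * τ (x i) * c₀⁻¹
  · obtain ⟨c₀, hc₀⟩ := h
    exact (zcp_fiber_eq τ x c₀ hc₀).le
  · have : IsEmpty {c : G // ∀ i, x i = c * τ (x i) * c⁻¹} :=
      ⟨fun c => h ⟨c.1, c.2⟩⟩
    simp [Nat.card_of_isEmpty]

lemma zcp_fiber_pos {n : ℕ} (x : Fin n → G) :
    0 < Nat.card {c : G // ∀ i, x i * c = c * x i} := by
  have : Nonempty {c : G // ∀ i, x i * c = c * x i} := ⟨⟨1, fun i => by simp⟩⟩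
  exact Nat.card_pos

lemma zcp_fiber_eq_iff (τ : G → G) {n : ℕ} (x : Fin n → G) :
    (Nat.card {c : G // ∀ i, x i = c * τ (x i) * c⁻¹} =
      Nat.card {c : G // ∀ i, x i * c = c * x i}) ↔
      ∃ c₀ : G, ∀ i, x i = c₀ * τ (x i) * c₀⁻¹ := by
  constructor
  · intro h
    by_contra hne
    have he : IsEmpty {c : G // ∀ i, x i = c * τ (x i) * c⁻¹} :=
      ⟨fun c => hne ⟨c.1, c.2⟩⟩
    have h0 : Nat.card {c : G // ∀ i, x i = c * τ (x i) * c⁻¹} = 0 :=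
      Nat.card_of_isEmpty
    have := zcp_fiber_pos x
    omega
  · rintro ⟨c₀, hc₀⟩
    exact zcp_fiber_eq τ x c₀ hc₀

end Grp
end ZetaAuxAll

/-- `Σ_g ζ_τ(g)ⁿ⁺¹ ≤ Σ_g v(g)ⁿ`, with equality iff every double
coset of the diagonal subgroup in `Gⁿ⁺¹` is `τ_{n+1}`-invariant (equivalently, iff
every simultaneous-conjugation orbit of `G` on `Gⁿ` is `τ_n`-invariant). -/
theorem zeta_le_centralizer_power
    {G : Type*} [Group G] [Fintype G]
    (τ : G → G) (hmul : ∀ a b : G, τ (a * b) = τ b * τ a)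
    (hinv : ∀ g : G, τ (τ g) = g) (n : ℕ) (hn : 1 ≤ n) :
    ((∑ g : G, Set.ncard {h : G | τ h⁻¹ * h = g} ^ (n + 1)) ≤
      ∑ g : G, Set.ncard {h : G | h * g = g * h} ^ n) ∧
    ((∑ g : G, Set.ncard {h : G | τ h⁻¹ * h = g} ^ (n + 1)) =
        (∑ g : G, Set.ncard {h : G | h * g = g * h} ^ n) ↔
      ∀ s : Fin (n + 1) → G,
        (fun x : Fin (n + 1) → G => fun i => τ (x i)) ''
            {x | ∃ a b : G, x = fun i => a * s i * b} =
          {x | ∃ a b : G, x = fun i => a * s i * b}) ∧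
    ((∑ g : G, Set.ncard {h : G | τ h⁻¹ * h = g} ^ (n + 1)) =
        (∑ g : G, Set.ncard {h : G | h * g = g * h} ^ n) ↔
      ∀ x : Fin n → G,
        (fun y : Fin n → G => fun i => τ (y i)) ''
            {y | ∃ g : G, y = fun i => g * x i * g⁻¹} =
          {y | ∃ g : G, y = fun i => g * x i * g⁻¹}) := by
  classical
  have key1 : (∑ g : G, Set.ncard {h : G | τ h⁻¹ * h = g} ^ (n + 1))
      = ∑ x : Fin n → G, Nat.card {c : G // ∀ i, x i = c * τ (x i) * c⁻¹} :=
    calc (∑ g : G, Set.ncard {h : G | τ h⁻¹ * h = g} ^ (n + 1))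
        = ∑ g : G, Nat.card {x : Fin (n + 1) → G // ∀ i, τ (x i)⁻¹ * x i = g} :=
          Finset.sum_congr rfl fun g _ => zcp_ncard_pow (fun h => τ h⁻¹ * h = g) (n + 1)
      _ = Nat.card {p : G × (Fin (n + 1) → G) // ∀ i, τ (p.2 i)⁻¹ * p.2 i = p.1} :=
          zcp_sum_card_fiber _
      _ = Nat.card {x : Fin (n + 1) → G // ∀ i, τ (x i)⁻¹ * x i = τ (x 0)⁻¹ * x 0} :=
          Nat.card_congr (zcp_equivDet n (fun h : G => τ h⁻¹ * h))
      _ = Nat.card {p : G × (Fin n → G) // ∀ i, p.2 i = p.1 * τ (p.2 i) * p.1⁻¹} :=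
          Nat.card_congr (zcp_keyEquiv τ hmul hinv n)
      _ = Nat.card {q : (Fin n → G) × G // ∀ i, q.1 i = q.2 * τ (q.1 i) * q.2⁻¹} :=
          Nat.card_congr ((Equiv.prodComm G (Fin n → G)).subtypeEquiv (fun p => Iff.rfl))
      _ = ∑ x : Fin n → G, Nat.card {c : G // ∀ i, x i = c * τ (x i) * c⁻¹} :=
          (zcp_sum_card_fiber (fun (x : Fin n → G) (c : G) =>
            ∀ i, x i = c * τ (x i) * c⁻¹)).symm
  have key2 : (∑ g : G, Set.ncard {h : G | h * g = g * h} ^ n)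
      = ∑ x : Fin n → G, Nat.card {c : G // ∀ i, x i * c = c * x i} :=
    calc (∑ g : G, Set.ncard {h : G | h * g = g * h} ^ n)
        = ∑ g : G, Nat.card {x : Fin n → G // ∀ i, x i * g = g * x i} :=
          Finset.sum_congr rfl fun g _ => zcp_ncard_pow (fun h => h * g = g * h) n
      _ = Nat.card {p : G × (Fin n → G) // ∀ i, p.2 i * p.1 = p.1 * p.2 i} :=
          zcp_sum_card_fiber _
      _ = Nat.card {q : (Fin n → G) × G // ∀ i, q.1 i * q.2 = q.2 * q.1 i} :=
          Nat.card_congr ((Equiv.prodComm G (Fin n → G)).subtypeEquiv (fun p => Iff.rfl))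
      _ = ∑ x : Fin n → G, Nat.card {c : G // ∀ i, x i * c = c * x i} :=
          (zcp_sum_card_fiber (fun (x : Fin n → G) (c : G) =>
            ∀ i, x i * c = c * x i)).symm
  have hle : (∑ g : G, Set.ncard {h : G | τ h⁻¹ * h = g} ^ (n + 1)) ≤
      ∑ g : G, Set.ncard {h : G | h * g = g * h} ^ n := by
    rw [key1, key2]
    exact Finset.sum_le_sum fun x _ => zcp_fiber_le τ x
  have hiffC : ((∑ g : G, Set.ncard {h : G | τ h⁻¹ * h = g} ^ (n + 1)) =
      ∑ g : G, Set.ncard {h : G | h * g = g * h} ^ n) ↔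
      (∀ x : Fin n → G, ∃ c : G, ∀ i, x i = c * τ (x i) * c⁻¹) := by
    rw [key1, key2, Finset.sum_eq_sum_iff_of_le (fun x _ => zcp_fiber_le τ x)]
    constructor
    · intro h x
      exact (zcp_fiber_eq_iff τ x).1 (h x (Finset.mem_univ x))
    · intro h x _
      exact (zcp_fiber_eq_iff τ x).2 (h x)
  exact ⟨hle, hiffC.trans (zcp_C_iff_coset τ hmul hinv n),
    hiffC.trans (zcp_C_iff_orbit τ hmul hinv n)⟩
end
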